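/- arXiv:1705.08521 — 6 statements merged into one kernel-verified Lean document; each statement's English description precedes it below -/
import Mathlib

section
/- Let R = U Zᵀ with UᵀU = I and Z full rank r, and let 𝔛 ∈ ℝ^{l×m}. Then the pair (X_U, X_Z) = ((I − UUᵀ)𝔛Z(ZᵀZ)^{-1}, 𝔛ᵀU) is the unique minimizer over the horizontal space {(A,B) : UᵀA = 0} of the functional J(A,B) = ½‖𝔛 − AZᵀ − U Bᵀ‖², where ‖·‖ is the Frobenius norm. Equivalently, the orthogonal projection of 𝔛 onto the tangent space at UZᵀ is Π(𝔛) = (I−UUᵀ)𝔛Z(ZᵀZ)^{-1}Zᵀ + UUᵀ𝔛. -/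
/-!
The residual `E = 𝔛 - X_U Zᵀ - U X_Zᵀ` factors as `(I - UUᵀ) 𝔛 (I - Z(ZᵀZ)⁻¹Zᵀ)`, so `E Z = 0`
and `Uᵀ E = 0`: it is Frobenius-orthogonal to every tangent vector `D Zᵀ + U Cᵀ`. For horizontal
`D` the two summands of such a vector are orthogonal as well, and `‖U Cᵀ‖ = ‖C‖` because
`UᵀU = I`. Pythagoras then gives, for horizontal `A`,
`J(A, B) = J(X_U, X_Z) + ½‖(A - X_U) Zᵀ‖² + ½‖B - X_Z‖²`,
and the excess vanishes only when `(A - X_U) Zᵀ = 0` and `B = X_Z`; the former forces `A = X_U`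
because `ZᵀZ` is invertible, `Z` having full column rank.
-/

open Matrix

section Frobenius

variable {m n : Type*} [Fintype m] [Fintype n]

theorem Matrix.trace_transpose_mul_self_nonneg (X : Matrix m n ℝ) : 0 ≤ trace (Xᵀ * X) := by
  simpa using (posSemidef_conjTranspose_mul_self X).trace_nonneg

theorem Matrix.trace_transpose_mul_self_eq_zero_iff {X : Matrix m n ℝ} :
    trace (Xᵀ * X) = 0 ↔ X = 0 := by
  simpa using trace_conjTranspose_mul_self_eq_zero_iff (A := X)

variable {R : Type*} [CommRing R]

theorem Matrix.trace_transpose_mul_comm (X Y : Matrix m n R) :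
    trace (Xᵀ * Y) = trace (Yᵀ * X) := by
  rw [← trace_transpose, transpose_mul, transpose_transpose]

theorem Matrix.trace_transpose_mul_self_add_of_orthogonal {X Y : Matrix m n R}
    (h : trace (Xᵀ * Y) = 0) :
    trace ((X + Y)ᵀ * (X + Y)) = trace (Xᵀ * X) + trace (Yᵀ * Y) := by
  simp only [transpose_add, Matrix.add_mul, Matrix.mul_add, trace_add,
    trace_transpose_mul_comm Y X, h]
  ring

theorem Matrix.trace_transpose_mul_self_sub_of_orthogonal {X Y : Matrix m n R}
    (h : trace (Xᵀ * Y) = 0) :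
    trace ((X - Y)ᵀ * (X - Y)) = trace (Xᵀ * X) + trace (Yᵀ * Y) := by
  simp only [transpose_sub, Matrix.sub_mul, Matrix.mul_sub, trace_sub,
    trace_transpose_mul_comm Y X, h]
  ring

end Frobenius

section Gram

variable {m n : Type*} [Fintype m] [Fintype n] [DecidableEq n]

theorem Matrix.isUnit_transpose_mul_self_of_rank_eq_card {Z : Matrix m n ℝ}
    (hZ : Z.rank = Fintype.card n) : IsUnit (Zᵀ * Z) := by
  rw [← mulVec_surjective_iff_isUnit, ← coe_mulVecLin, ← LinearMap.range_eq_top]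
  apply Submodule.eq_top_of_finrank_eq
  rw [← rank, rank_transpose_mul_self, hZ, Module.finrank_fintype_fun_eq_card]

variable {l R : Type*} [CommRing R] {Z : Matrix m n R}

theorem Matrix.eq_zero_of_mul_transpose_eq_zero (hZ : IsUnit (Zᵀ * Z)) {D : Matrix l n R}
    (h : D * Zᵀ = 0) : D = 0 := by
  have hG : D * (Zᵀ * Z) = 0 := by rw [← Matrix.mul_assoc, h, Matrix.zero_mul]
  simpa [Matrix.mul_assoc, mul_nonsing_inv _ ((isUnit_iff_isUnit_det _).mp hZ)] using
    congrArg (· * (Zᵀ * Z)⁻¹) hG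

theorem Matrix.one_sub_mul_nonsing_inv_mul_transpose_mul [DecidableEq m]
    (hZ : IsUnit (Zᵀ * Z)) : (1 - Z * (Zᵀ * Z)⁻¹ * Zᵀ) * Z = 0 := by
  rw [Matrix.sub_mul, Matrix.one_mul, Matrix.mul_assoc _ Zᵀ Z, Matrix.mul_assoc Z,
    nonsing_inv_mul _ ((isUnit_iff_isUnit_det _).mp hZ), Matrix.mul_one, sub_self]

end Gram

section TangentSpace

variable {l m r R : Type*} [Fintype l] [Fintype m] [Fintype r] [CommRing R] {U : Matrix l r R}
  {Z : Matrix m r R}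

theorem Matrix.transpose_mul_one_sub_mul_transpose [DecidableEq l] [DecidableEq r]
    (hU : Uᵀ * U = 1) : Uᵀ * (1 - U * Uᵀ) = 0 := by
  rw [Matrix.mul_sub, Matrix.mul_one, ← Matrix.mul_assoc, hU, Matrix.one_mul, sub_self]

theorem sub_sub_mul_transpose_eq_one_sub_mul_mul_one_sub [DecidableEq l] [DecidableEq m]
    (U : Matrix l r R) (Z : Matrix m r R) (X : Matrix l m R) (G : Matrix r r R) :
    X - (1 - U * Uᵀ) * X * Z * G * Zᵀ - U * (Xᵀ * U)ᵀ =
      (1 - U * Uᵀ) * X * (1 - Z * G * Zᵀ) := by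
  simp only [transpose_mul, transpose_transpose, Matrix.mul_sub, Matrix.sub_mul, Matrix.mul_one,
    Matrix.one_mul, Matrix.mul_assoc]
  abel

theorem trace_transpose_mul_tangent_eq_zero {E : Matrix l m R} (hEZ : E * Z = 0)
    (hUE : Uᵀ * E = 0) (D : Matrix l r R) (C : Matrix m r R) :
    trace (Eᵀ * (D * Zᵀ + U * Cᵀ)) = 0 := by
  have hEU : Eᵀ * U = 0 := by rw [← transpose_transpose U, ← transpose_mul, hUE, transpose_zero]
  rw [Matrix.mul_add, trace_add, ← Matrix.mul_assoc, trace_mul_cycle, ← transpose_mul, hEZ,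
    ← Matrix.mul_assoc, hEU]
  simp

theorem trace_transpose_mul_self_tangent [DecidableEq r] (hU : Uᵀ * U = 1) {D : Matrix l r R}
    (hD : Uᵀ * D = 0) (C : Matrix m r R) :
    trace ((D * Zᵀ + U * Cᵀ)ᵀ * (D * Zᵀ + U * Cᵀ)) =
      trace ((D * Zᵀ)ᵀ * (D * Zᵀ)) + trace (Cᵀ * C) := by
  have hDU : Dᵀ * U = 0 := by rw [← transpose_transpose U, ← transpose_mul, hD, transpose_zero]
  have horth : trace ((D * Zᵀ)ᵀ * (U * Cᵀ)) = 0 := by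
    rw [transpose_mul, transpose_transpose, Matrix.mul_assoc, ← Matrix.mul_assoc Dᵀ, hDU]
    simp
  have hiso : (U * Cᵀ)ᵀ * (U * Cᵀ) = C * Cᵀ := by
    rw [transpose_mul, transpose_transpose, Matrix.mul_assoc, ← Matrix.mul_assoc Uᵀ, hU,
      Matrix.one_mul]
  rw [trace_transpose_mul_self_add_of_orthogonal horth, hiso, trace_mul_comm C]

theorem trace_residual_eq_add_of_normal_equations [DecidableEq r] (hU : Uᵀ * U = 1)
    {X : Matrix l m R} {A₀ A : Matrix l r R} {B₀ B : Matrix m r R}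
    (hZ₀ : (X - A₀ * Zᵀ - U * B₀ᵀ) * Z = 0) (hU₀ : Uᵀ * (X - A₀ * Zᵀ - U * B₀ᵀ) = 0)
    (hA : Uᵀ * (A - A₀) = 0) :
    trace ((X - A * Zᵀ - U * Bᵀ)ᵀ * (X - A * Zᵀ - U * Bᵀ)) =
      trace ((X - A₀ * Zᵀ - U * B₀ᵀ)ᵀ * (X - A₀ * Zᵀ - U * B₀ᵀ)) +
        trace (((A - A₀) * Zᵀ)ᵀ * ((A - A₀) * Zᵀ)) + trace ((B - B₀)ᵀ * (B - B₀)) := by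
  have hsplit : X - A * Zᵀ - U * Bᵀ =
      (X - A₀ * Zᵀ - U * B₀ᵀ) - ((A - A₀) * Zᵀ + U * (B - B₀)ᵀ) := by
    simp only [Matrix.sub_mul, transpose_sub, Matrix.mul_sub]
    abel
  rw [hsplit, trace_transpose_mul_self_sub_of_orthogonal
      (trace_transpose_mul_tangent_eq_zero hZ₀ hU₀ _ _),
    trace_transpose_mul_self_tangent hU hA, add_assoc]

end TangentSpace

/-- The pair `((I−UUᵀ)𝔛Z(ZᵀZ)⁻¹, 𝔛ᵀU)` is the unique minimizer over the horizontal space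
of `J(A,B) = ½‖𝔛 − AZᵀ − UBᵀ‖²` (squared Frobenius norm written via the trace), and the
resulting tangent projection of `𝔛` is `(I−UUᵀ)𝔛Z(ZᵀZ)⁻¹Zᵀ + UUᵀ𝔛`. -/
theorem tangent_projection_is_unique_minimizer
    (l m r : ℕ) (U : Matrix (Fin l) (Fin r) ℝ) (Z : Matrix (Fin m) (Fin r) ℝ)
    (hU : Uᵀ * U = 1) (hZ : Z.rank = r)
    (𝔛 : Matrix (Fin l) (Fin m) ℝ) :
    let J : Matrix (Fin l) (Fin r) ℝ → Matrix (Fin m) (Fin r) ℝ → ℝ := fun A B =>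
      (1 / 2) * Matrix.trace ((𝔛 - A * Zᵀ - U * Bᵀ)ᵀ * (𝔛 - A * Zᵀ - U * Bᵀ))
    let XU : Matrix (Fin l) (Fin r) ℝ := (1 - U * Uᵀ) * 𝔛 * Z * (Zᵀ * Z)⁻¹
    let XZ : Matrix (Fin m) (Fin r) ℝ := 𝔛ᵀ * U
    Uᵀ * XU = 0 ∧
    (∀ (A : Matrix (Fin l) (Fin r) ℝ) (B : Matrix (Fin m) (Fin r) ℝ),
      Uᵀ * A = 0 → J XU XZ ≤ J A B) ∧
    (∀ (A : Matrix (Fin l) (Fin r) ℝ) (B : Matrix (Fin m) (Fin r) ℝ),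
      Uᵀ * A = 0 → J A B = J XU XZ → A = XU ∧ B = XZ) ∧
    XU * Zᵀ + U * XZᵀ = (1 - U * Uᵀ) * 𝔛 * Z * (Zᵀ * Z)⁻¹ * Zᵀ + U * Uᵀ * 𝔛 := by
  intro J XU XZ
  have hG : IsUnit (Zᵀ * Z) := isUnit_transpose_mul_self_of_rank_eq_card (by simpa using hZ)
  have hP : Uᵀ * (1 - U * Uᵀ) = 0 := transpose_mul_one_sub_mul_transpose hU
  have hXU : Uᵀ * XU = 0 := by simp only [XU, ← Matrix.mul_assoc, hP, Matrix.zero_mul]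
  have hres := sub_sub_mul_transpose_eq_one_sub_mul_mul_one_sub U Z 𝔛 (Zᵀ * Z)⁻¹
  have hexpand (A : Matrix (Fin l) (Fin r) ℝ) (B : Matrix (Fin m) (Fin r) ℝ) (hA : Uᵀ * A = 0) :
      J A B = J XU XZ + (1 / 2) * (trace (((A - XU) * Zᵀ)ᵀ * ((A - XU) * Zᵀ)) +
        trace ((B - XZ)ᵀ * (B - XZ))) := by
    have hresZ : (𝔛 - XU * Zᵀ - U * XZᵀ) * Z = 0 := by
      rw [hres, Matrix.mul_assoc, one_sub_mul_nonsing_inv_mul_transpose_mul hG, Matrix.mul_zero]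
    have hresU : Uᵀ * (𝔛 - XU * Zᵀ - U * XZᵀ) = 0 := by
      rw [hres, ← Matrix.mul_assoc, ← Matrix.mul_assoc, hP, Matrix.zero_mul, Matrix.zero_mul]
    simp only [J]
    rw [trace_residual_eq_add_of_normal_equations hU hresZ hresU
      (by rw [Matrix.mul_sub, hA, hXU, sub_self])]
    ring
  have hD₀ (A : Matrix (Fin l) (Fin r) ℝ) := trace_transpose_mul_self_nonneg ((A - XU) * Zᵀ)
  have hC₀ (B : Matrix (Fin m) (Fin r) ℝ) := trace_transpose_mul_self_nonneg (B - XZ)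
  refine ⟨hXU, fun A B hA => ?_, fun A B hA hJ => ?_, ?_⟩
  · linarith [hexpand A B hA, hD₀ A, hC₀ B]
  · rw [hexpand A B hA, add_eq_left, mul_eq_zero, add_eq_zero_iff_of_nonneg (hD₀ A) (hC₀ B),
      trace_transpose_mul_self_eq_zero_iff, trace_transpose_mul_self_eq_zero_iff] at hJ
    obtain ⟨hD, hC⟩ := hJ.resolve_left (by norm_num)
    exact ⟨sub_eq_zero.mp (eq_zero_of_mul_transpose_eq_zero hG hD), sub_eq_zero.mp hC⟩
  · simp only [XU, XZ, transpose_mul, transpose_transpose, Matrix.mul_assoc]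
end

section
/- Let R = UZᵀ with UᵀU = I and Z full rank r, and let N satisfy UᵀN = 0 and NZ = 0, with rank(N) = k. Then there exist orthonormal vectors u₁,…,u_{r+k} in ℝ^l, orthonormal vectors v₁,…,v_{r+k} in ℝ^m, and positive reals σ₁,…,σ_{r+k} such that UZᵀ = Σ_{i=1}^r σᵢ uᵢ vᵢᵀ and N = Σ_{i=1}^k σ_{r+i} u_{r+i} v_{r+i}ᵀ. -/
/-!
Both `UZᵀ` (of rank `r`, since `Uᵀ(UZᵀ) = Zᵀ`) and `N` have compact singular value
decompositions, obtained from the spectral decomposition of `AᵀA`. A left singular vector of a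
matrix `A` is `σ⁻¹ A v`, so it lies in the column space of `A`; as `(UZᵀ)ᵀN = ZUᵀN = 0`, the
left singular vectors of `UZᵀ` are orthogonal to those of `N`. Symmetrically `NZ = 0` makes the
right singular vectors orthogonal, so the two decompositions concatenate.
-/

open Matrix

def DotOrthonormal {ι n R : Type*} [Fintype n] [DecidableEq ι] [Semiring R]
    (u : ι → n → R) : Prop :=
  ∀ i j, u i ⬝ᵥ u j = if i = j then 1 else 0

theorem DotOrthonormal.comp {ι κ n R : Type*} [Fintype n] [DecidableEq ι] [DecidableEq κ]
    [Semiring R] {u : ι → n → R} (hu : DotOrthonormal u) {f : κ → ι} (hf : f.Injective) :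
    DotOrthonormal (u ∘ f) := by
  intro i j
  simp [hu (f i) (f j), hf.eq_iff]

theorem DotOrthonormal.append {a b : ℕ} {n R : Type*} [Fintype n] [CommSemiring R]
    {u₁ : Fin a → n → R} {u₂ : Fin b → n → R} (h₁ : DotOrthonormal u₁) (h₂ : DotOrthonormal u₂)
    (h₁₂ : ∀ i j, u₁ i ⬝ᵥ u₂ j = 0) : DotOrthonormal (Fin.append u₁ u₂) := by
  intro i j
  induction i using Fin.addCases <;> induction j using Fin.addCases <;>
    simp [h₁ _ _, h₂ _ _, h₁₂, dotProduct_comm (u₂ _), Fin.ext_iff] <;> omega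

theorem dotOrthonormal_orthonormalBasis {ι n : Type*} [Fintype ι] [Fintype n] [DecidableEq ι]
    (w : OrthonormalBasis ι ℝ (EuclideanSpace ℝ n)) : DotOrthonormal fun i => ⇑(w i) := by
  intro i j
  rw [← orthonormal_iff_ite.mp w.orthonormal i j, EuclideanSpace.inner_eq_star_dotProduct,
    star_trivial, dotProduct_comm]

theorem sum_vecMulVec_orthonormalBasis {ι n : Type*} [Fintype ι] [Fintype n] [DecidableEq n]
    (w : OrthonormalBasis ι ℝ (EuclideanSpace ℝ n)) :
    ∑ j, vecMulVec ⇑(w j) ⇑(w j) = 1 := by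
  refine ext_iff_mulVec.mpr fun x => ?_
  have h := congrArg WithLp.ofLp (w.sum_repr' (WithLp.toLp 2 x))
  simp only [WithLp.ofLp_sum, WithLp.ofLp_smul, EuclideanSpace.inner_eq_star_dotProduct,
    star_trivial] at h
  simpa [Matrix.sum_mulVec, vecMulVec_mulVec, dotProduct_comm] using h

theorem mulVec_dotProduct_mulVec {l m n R : Type*} [Fintype l] [Fintype m] [Fintype n]
    [CommSemiring R] (A : Matrix l m R) (B : Matrix l n R) (x : m → R) (y : n → R) :
    (A *ᵥ x) ⬝ᵥ (B *ᵥ y) = x ⬝ᵥ (Aᵀ * B) *ᵥ y := by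
  rw [← mulVec_mulVec, dotProduct_mulVec x, vecMul_transpose]

theorem rank_mul_of_transpose_mul_self_eq_one {l m n R : Type*} [Fintype l] [Fintype m]
    [Fintype n] [DecidableEq m] [Field R] {U : Matrix l m R} (hU : Uᵀ * U = 1) (B : Matrix m n R) :
    (U * B).rank = B.rank := by
  refine le_antisymm (rank_mul_le_right U B) ?_
  calc B.rank = (Uᵀ * (U * B)).rank := by rw [← Matrix.mul_assoc, hU, Matrix.one_mul]
    _ ≤ (U * B).rank := rank_mul_le_right _ _

theorem isHermitian_transpose_mul_self {m n : Type*} [Fintype m] (A : Matrix m n ℝ) :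
    (Aᵀ * A).IsHermitian := by
  simpa using isHermitian_conjTranspose_mul_self A

structure IsCompactSVD {ι m n : Type*} [Fintype ι] [DecidableEq ι] [Fintype m] [Fintype n]
    (A : Matrix m n ℝ) (u : ι → m → ℝ) (v : ι → n → ℝ) (σ : ι → ℝ) : Prop where
  orthonormal_left : DotOrthonormal u
  orthonormal_right : DotOrthonormal v
  pos : ∀ i, 0 < σ i
  eq_sum : A = ∑ i, σ i • vecMulVec (u i) (v i)
  mulVec_right : ∀ i, A *ᵥ v i = σ i • u i
  transpose_mulVec_left : ∀ i, Aᵀ *ᵥ u i = σ i • v i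

namespace IsCompactSVD

variable {ι κ l m n : Type*} [Fintype ι] [DecidableEq ι] [Fintype κ] [DecidableEq κ]
  [Fintype l] [Fintype m] [Fintype n] {A : Matrix l m ℝ} {u₁ : ι → l → ℝ} {v₁ : ι → m → ℝ}
  {σ₁ : ι → ℝ} {B : Matrix l n ℝ} {u₂ : κ → l → ℝ} {v₂ : κ → n → ℝ} {σ₂ : κ → ℝ}

theorem comp_equiv (h : IsCompactSVD A u₁ v₁ σ₁) (e : κ ≃ ι) :
    IsCompactSVD A (u₁ ∘ e) (v₁ ∘ e) (σ₁ ∘ e) where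
  orthonormal_left := h.orthonormal_left.comp e.injective
  orthonormal_right := h.orthonormal_right.comp e.injective
  pos i := h.pos (e i)
  eq_sum := h.eq_sum.trans (e.sum_comp fun i => σ₁ i • vecMulVec (u₁ i) (v₁ i)).symm
  mulVec_right i := h.mulVec_right (e i)
  transpose_mulVec_left i := h.transpose_mulVec_left (e i)

theorem transpose (h : IsCompactSVD A u₁ v₁ σ₁) : IsCompactSVD Aᵀ v₁ u₁ σ₁ where
  orthonormal_left := h.orthonormal_right
  orthonormal_right := h.orthonormal_left
  pos := h.pos
  eq_sum := by
    conv_lhs => rw [h.eq_sum]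
    simp [transpose_sum]
  mulVec_right := h.transpose_mulVec_left
  transpose_mulVec_left := by simpa using h.mulVec_right

theorem dotProduct_left_eq_zero (h₁ : IsCompactSVD A u₁ v₁ σ₁) (h₂ : IsCompactSVD B u₂ v₂ σ₂)
    (hAB : Aᵀ * B = 0) (i : ι) (j : κ) : u₁ i ⬝ᵥ u₂ j = 0 := by
  have h : (σ₁ i * σ₂ j) * (u₁ i ⬝ᵥ u₂ j) = 0 :=
    calc (σ₁ i * σ₂ j) * (u₁ i ⬝ᵥ u₂ j) = (A *ᵥ v₁ i) ⬝ᵥ (B *ᵥ v₂ j) := by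
          rw [h₁.mulVec_right, h₂.mulVec_right, smul_dotProduct, dotProduct_smul, smul_eq_mul,
            smul_eq_mul, mul_assoc]
      _ = 0 := by rw [mulVec_dotProduct_mulVec, hAB, zero_mulVec, dotProduct_zero]
  simpa [(h₁.pos i).ne', (h₂.pos j).ne'] using h

end IsCompactSVD

namespace Matrix.IsHermitian

variable {m n : Type*} [Fintype m] [Fintype n] [DecidableEq n] {A : Matrix m n ℝ}
  (hA : (Aᵀ * A).IsHermitian)

theorem eigenvalues_transpose_mul_self_nonneg (j : n) : 0 ≤ hA.eigenvalues j := by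
  simpa using (posSemidef_conjTranspose_mul_self A).eigenvalues_nonneg j

theorem dotProduct_mulVec_eigenvectorBasis (i j : n) :
    (A *ᵥ hA.eigenvectorBasis i) ⬝ᵥ (A *ᵥ hA.eigenvectorBasis j) =
      if i = j then hA.eigenvalues j else 0 := by
  rw [mulVec_dotProduct_mulVec, hA.mulVec_eigenvectorBasis, dotProduct_smul,
    dotOrthonormal_orthonormalBasis _ i j]
  simp

theorem mulVec_eigenvectorBasis_eq_zero {j : n} (hj : hA.eigenvalues j = 0) :
    A *ᵥ hA.eigenvectorBasis j = 0 :=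
  dotProduct_self_eq_zero.mp (by rw [hA.dotProduct_mulVec_eigenvectorBasis, if_pos rfl, hj])

theorem eq_sum_vecMulVec_eigenvectorBasis :
    A = ∑ j : {j // hA.eigenvalues j ≠ 0},
      vecMulVec (A *ᵥ hA.eigenvectorBasis j) (hA.eigenvectorBasis j) := by
  classical
  calc A = A * ∑ j, vecMulVec ⇑(hA.eigenvectorBasis j) ⇑(hA.eigenvectorBasis j) := by
        rw [sum_vecMulVec_orthonormalBasis, Matrix.mul_one]
    _ = ∑ j ∈ Finset.univ.filter fun j => hA.eigenvalues j ≠ 0,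
          vecMulVec (A *ᵥ hA.eigenvectorBasis j) (hA.eigenvectorBasis j) := by
        rw [Matrix.mul_sum]
        simp_rw [mul_vecMulVec]
        refine (Finset.sum_filter_of_ne (p := fun j => hA.eigenvalues j ≠ 0)
          fun j _ hne hj => hne ?_).symm
        rw [hA.mulVec_eigenvectorBasis_eq_zero hj, zero_vecMulVec]
    _ = _ := Finset.sum_subtype _ (by simp) _

theorem isCompactSVD_eigenvectorBasis :
    IsCompactSVD A
      (fun j : {j // hA.eigenvalues j ≠ 0} => (√(hA.eigenvalues j))⁻¹ • A *ᵥ hA.eigenvectorBasis j)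
      (fun j => hA.eigenvectorBasis j) (fun j => √(hA.eigenvalues j)) := by
  have hpos (j : {j // hA.eigenvalues j ≠ 0}) : 0 < √(hA.eigenvalues j) :=
    Real.sqrt_pos.mpr ((hA.eigenvalues_transpose_mul_self_nonneg j).lt_of_ne' j.2)
  have hsq (j : {j // hA.eigenvalues j ≠ 0}) : √(hA.eigenvalues j) * √(hA.eigenvalues j) =
      hA.eigenvalues j :=
    Real.mul_self_sqrt (hA.eigenvalues_transpose_mul_self_nonneg j)
  refine
    { orthonormal_left := fun i j => ?_
      orthonormal_right := (dotOrthonormal_orthonormalBasis _).comp Subtype.val_injective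
      pos := hpos
      eq_sum := (hA.eq_sum_vecMulVec_eigenvectorBasis).trans (Finset.sum_congr rfl fun j _ => ?_)
      mulVec_right := fun j => (smul_inv_smul₀ (hpos j).ne' _).symm
      transpose_mulVec_left := fun j => ?_ }
  · rw [smul_dotProduct, dotProduct_smul, hA.dotProduct_mulVec_eigenvectorBasis]
    by_cases hij : i = j
    · subst hij
      rw [if_pos rfl, if_pos rfl, smul_smul, smul_eq_mul, ← mul_inv, hsq i, inv_mul_cancel₀ i.2]
    · rw [if_neg (Subtype.coe_injective.ne hij), if_neg hij, smul_zero, smul_zero]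
  · rw [smul_vecMulVec, smul_smul, mul_inv_cancel₀ (hpos j).ne', one_smul]
  · rw [mulVec_smul, mulVec_mulVec, hA.mulVec_eigenvectorBasis, smul_smul,
      inv_mul_eq_iff_eq_mul₀ (hpos j).ne' |>.mpr (hsq j).symm]

end Matrix.IsHermitian

theorem exists_isCompactSVD {m n : Type*} [Fintype m] [Fintype n] {s : ℕ} (A : Matrix m n ℝ)
    (h : A.rank = s) : ∃ u v σ, IsCompactSVD A (u : Fin s → m → ℝ) v σ := by
  classical
  have hA := isHermitian_transpose_mul_self A
  have hcard : Fintype.card {j // hA.eigenvalues j ≠ 0} = s := by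
    rw [← hA.rank_eq_card_non_zero_eigs, rank_transpose_mul_self, h]
  exact ⟨_, _, _, hA.isCompactSVD_eigenvectorBasis.comp_equiv (Fintype.equivFinOfCardEq hcard).symm⟩

/-- A rank-`r` point `R = UZᵀ` together with a rank-`k` normal vector `N` (`UᵀN = 0`,
`NZ = 0`) admit a joint singular value decomposition: there are orthonormal families
`(uᵢ)`, `(vᵢ)` of length `r+k` and positive `σᵢ` with `UZᵀ = Σ_{i<r} σᵢ uᵢvᵢᵀ` and
`N = Σ_{j<k} σ_{r+j} u_{r+j} v_{r+j}ᵀ`. -/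
theorem normal_vector_joint_svd
    (l m r k : ℕ) (U : Matrix (Fin l) (Fin r) ℝ) (Z : Matrix (Fin m) (Fin r) ℝ)
    (hU : Uᵀ * U = 1) (hZ : Z.rank = r)
    (N : Matrix (Fin l) (Fin m) ℝ) (hN1 : Uᵀ * N = 0) (hN2 : N * Z = 0)
    (hNk : N.rank = k) :
    ∃ (u : Fin (r + k) → Fin l → ℝ) (v : Fin (r + k) → Fin m → ℝ) (σ : Fin (r + k) → ℝ),
      (∀ i j, dotProduct (u i) (u j) = if i = j then 1 else 0) ∧
      (∀ i j, dotProduct (v i) (v j) = if i = j then 1 else 0) ∧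
      (∀ i, 0 < σ i) ∧
      U * Zᵀ = ∑ i : Fin r,
        σ (Fin.castAdd k i) • vecMulVec (u (Fin.castAdd k i)) (v (Fin.castAdd k i)) ∧
      N = ∑ j : Fin k,
        σ (Fin.natAdd r j) • vecMulVec (u (Fin.natAdd r j)) (v (Fin.natAdd r j)) := by
  obtain ⟨u₁, v₁, σ₁, h₁⟩ := exists_isCompactSVD (U * Zᵀ)
    (by rw [rank_mul_of_transpose_mul_self_eq_one hU, rank_transpose, hZ])
  obtain ⟨u₂, v₂, σ₂, h₂⟩ := exists_isCompactSVD N hNk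
  have hcols : (U * Zᵀ)ᵀ * N = 0 := by
    rw [transpose_mul, transpose_transpose, Matrix.mul_assoc, hN1, Matrix.mul_zero]
  have hrows : (U * Zᵀ)ᵀᵀ * Nᵀ = 0 := by
    rw [transpose_transpose, Matrix.mul_assoc, ← transpose_mul, hN2, transpose_zero,
      Matrix.mul_zero]
  refine ⟨Fin.append u₁ u₂, Fin.append v₁ v₂, Fin.append σ₁ σ₂,
    h₁.orthonormal_left.append h₂.orthonormal_left (h₁.dotProduct_left_eq_zero h₂ hcols),
    h₁.orthonormal_right.append h₂.orthonormal_right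
      (h₁.transpose.dotProduct_left_eq_zero h₂.transpose hrows),
    fun i => ?_, by simpa only [Fin.append_left] using h₁.eq_sum,
    by simpa only [Fin.append_right] using h₂.eq_sum⟩
  induction i using Fin.addCases <;> simp [h₁.pos, h₂.pos]
end

section
/- Let R = UZᵀ with UᵀU = I and Z full rank, and let N satisfy UᵀN = 0, NZ = 0. The Weingarten map L_R(N), defined on the tangent space by L_R(N)(X) = U X_Uᵀ N + N X_Z (ZᵀZ)^{-1} Zᵀ where X = X_U Zᵀ + U X_Zᵀ with UᵀX_U = 0, is symmetric with respect to the Frobenius inner product: ⟨L_R(N)X, Y⟩ = ⟨X, L_R(N)Y⟩ for all tangent X, Y; explicitly ⟨X, L_R(N)Y⟩ = Tr((X_U Y_Zᵀ + Y_U X_Zᵀ)ᵀ N). -/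
/-!
Expanding `Xᵀ L_R(N)(Y)` with `UᵀU = 1`, `UᵀX_U = 0` and `UᵀN = 0` leaves only
`X_Z Y_Uᵀ N + Z X_Uᵀ N Y_Z (ZᵀZ)⁻¹ Zᵀ`; under the trace, cycling `Z` to the end cancels
`(ZᵀZ)⁻¹ (ZᵀZ)`, and what remains, `Tr((X_U Y_Zᵀ + Y_U X_Zᵀ)ᵀ N)`, is symmetric in `X` and `Y`.
-/

open Matrix

namespace Matrix

section Rank

variable {κ ρ R : Type*} [Fintype κ] [Fintype ρ] [DecidableEq ρ] [Field R]

theorem isUnit_of_rank_eq_card {A : Matrix ρ ρ R}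
    (hA : A.rank = Fintype.card ρ) : IsUnit A := by
  rw [← mulVec_surjective_iff_isUnit]
  have hrange : LinearMap.range A.mulVecLin = ⊤ :=
    Submodule.eq_top_of_finrank_eq (by simpa [rank] using hA)
  exact LinearMap.range_eq_top.mp hrange

theorem isUnit_transpose_mul_self_of_rank_eq_card_s6 [LinearOrder R] [IsStrictOrderedRing R]
    {Z : Matrix κ ρ R} (hZ : Z.rank = Fintype.card ρ) : IsUnit (Zᵀ * Z) :=
  isUnit_of_rank_eq_card (by rw [rank_transpose_mul_self, hZ])

end Rank

section Weingarten

variable {ι κ ρ R : Type*} [Fintype ι] [Fintype κ] [Fintype ρ] [DecidableEq ρ] [CommRing R]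

noncomputable def weingartenMap (U : Matrix ι ρ R) (Z : Matrix κ ρ R) (N : Matrix ι κ R)
    (XU : Matrix ι ρ R) (XZ : Matrix κ ρ R) : Matrix ι κ R :=
  U * XUᵀ * N + N * XZ * (Zᵀ * Z)⁻¹ * Zᵀ

theorem transpose_mul_weingartenMap {U AU BU : Matrix ι ρ R} {Z AZ BZ : Matrix κ ρ R}
    {N : Matrix ι κ R} (hU : Uᵀ * U = 1) (hN : Uᵀ * N = 0) (hAU : Uᵀ * AU = 0) :
    (AU * Zᵀ + U * AZᵀ)ᵀ * weingartenMap U Z N BU BZ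
      = AZ * BUᵀ * N + Z * (AUᵀ * N * BZ * (Zᵀ * Z)⁻¹ * Zᵀ) := by
  have hAU' : AUᵀ * U = 0 := by simpa using congrArg transpose hAU
  simp only [weingartenMap, transpose_add, transpose_mul, transpose_transpose, Matrix.add_mul,
    Matrix.mul_add, Matrix.mul_assoc]
  simp only [← Matrix.mul_assoc AUᵀ U, ← Matrix.mul_assoc Uᵀ U, ← Matrix.mul_assoc Uᵀ N, hAU', hU,
    hN, Matrix.zero_mul, Matrix.mul_zero, Matrix.one_mul, zero_add, add_zero]

theorem trace_transpose_mul_weingartenMap {U AU BU : Matrix ι ρ R} {Z AZ BZ : Matrix κ ρ R}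
    {N : Matrix ι κ R} (hU : Uᵀ * U = 1) (hZ : IsUnit (Zᵀ * Z)) (hN : Uᵀ * N = 0)
    (hAU : Uᵀ * AU = 0) :
    trace ((AU * Zᵀ + U * AZᵀ)ᵀ * weingartenMap U Z N BU BZ)
      = trace ((AU * BZᵀ + BU * AZᵀ)ᵀ * N) := by
  have hinv : (Zᵀ * Z)⁻¹ * (Zᵀ * Z) = 1 := nonsing_inv_mul _ ((isUnit_iff_isUnit_det _).mp hZ)
  have hcycle : trace (Z * (AUᵀ * N * BZ * (Zᵀ * Z)⁻¹ * Zᵀ)) = trace (BZ * AUᵀ * N) := by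
    rw [trace_mul_comm, Matrix.mul_assoc _ Zᵀ, Matrix.mul_assoc _ (Zᵀ * Z)⁻¹, hinv, Matrix.mul_one,
      trace_mul_cycle]
  rw [transpose_mul_weingartenMap hU hN hAU, trace_add, hcycle, transpose_add, Matrix.add_mul,
    trace_add, add_comm]
  simp only [transpose_mul, transpose_transpose]

end Weingarten

end Matrix

theorem weingarten_map_symmetric_general
    (l m r : ℕ) (U : Matrix (Fin l) (Fin r) ℝ) (Z : Matrix (Fin m) (Fin r) ℝ)
    (hU : Uᵀ * U = 1) (hZ : Z.rank = r)
    (N : Matrix (Fin l) (Fin m) ℝ) (hN1 : Uᵀ * N = 0)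
    (XU YU : Matrix (Fin l) (Fin r) ℝ) (XZ YZ : Matrix (Fin m) (Fin r) ℝ)
    (hXU : Uᵀ * XU = 0) (hYU : Uᵀ * YU = 0)
    (X Y : Matrix (Fin l) (Fin m) ℝ)
    (hX : X = XU * Zᵀ + U * XZᵀ) (hY : Y = YU * Zᵀ + U * YZᵀ) :
    let LX : Matrix (Fin l) (Fin m) ℝ := U * XUᵀ * N + N * XZ * (Zᵀ * Z)⁻¹ * Zᵀ
    let LY : Matrix (Fin l) (Fin m) ℝ := U * YUᵀ * N + N * YZ * (Zᵀ * Z)⁻¹ * Zᵀ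
    Matrix.trace ((LX)ᵀ * Y) = Matrix.trace (Xᵀ * LY) ∧
    Matrix.trace (Xᵀ * LY) = Matrix.trace ((XU * YZᵀ + YU * XZᵀ)ᵀ * N) := by
  intro LX LY
  have hG : IsUnit (Zᵀ * Z) := isUnit_transpose_mul_self_of_rank_eq_card_s6 (by rwa [Fintype.card_fin])
  have hXLY : trace (Xᵀ * LY) = trace ((XU * YZᵀ + YU * XZᵀ)ᵀ * N) :=
    hX ▸ trace_transpose_mul_weingartenMap hU hG hN1 hXU
  have hYLX : trace (Yᵀ * LX) = trace ((YU * XZᵀ + XU * YZᵀ)ᵀ * N) :=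
    hY ▸ trace_transpose_mul_weingartenMap hU hG hN1 hYU
  refine ⟨?_, hXLY⟩
  rw [← trace_transpose, transpose_mul, transpose_transpose, hYLX, hXLY, add_comm]

/-- The Weingarten map `L_R(N) : X ↦ U X_Uᵀ N + N X_Z (ZᵀZ)⁻¹ Zᵀ` is symmetric for the
Frobenius inner product on tangent vectors, with
`⟨X, L_R(N)Y⟩ = Tr((X_U Y_Zᵀ + Y_U X_Zᵀ)ᵀ N)`. -/
theorem weingarten_map_symmetric
    (l m r : ℕ) (U : Matrix (Fin l) (Fin r) ℝ) (Z : Matrix (Fin m) (Fin r) ℝ)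
    (hU : Uᵀ * U = 1) (hZ : Z.rank = r)
    (N : Matrix (Fin l) (Fin m) ℝ) (hN1 : Uᵀ * N = 0) (hN2 : N * Z = 0)
    (XU YU : Matrix (Fin l) (Fin r) ℝ) (XZ YZ : Matrix (Fin m) (Fin r) ℝ)
    (hXU : Uᵀ * XU = 0) (hYU : Uᵀ * YU = 0)
    (X Y : Matrix (Fin l) (Fin m) ℝ)
    (hX : X = XU * Zᵀ + U * XZᵀ) (hY : Y = YU * Zᵀ + U * YZᵀ) :
    let LX : Matrix (Fin l) (Fin m) ℝ := U * XUᵀ * N + N * XZ * (Zᵀ * Z)⁻¹ * Zᵀ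
    let LY : Matrix (Fin l) (Fin m) ℝ := U * YUᵀ * N + N * YZ * (Zᵀ * Z)⁻¹ * Zᵀ
    Matrix.trace ((LX)ᵀ * Y) = Matrix.trace (Xᵀ * LY) ∧
    Matrix.trace (Xᵀ * LY) = Matrix.trace ((XU * YZᵀ + YU * XZᵀ)ᵀ * N) :=
  weingarten_map_symmetric_general l m r U Z hU hZ N hN1 XU YU XZ YZ hXU hYU X Y hX hY
end

section
/- In the setting above, the kernel of the Weingarten map L_R(N) equals span{uᵢ vᵀ : 1 ≤ i ≤ r, Nv = 0} ⊕ span{u vᵢᵀ : 1 ≤ i ≤ r, uᵀN = 0 and uᵀU = 0}, of dimension (m−k)r + (l−k−r)r, and together with the 2kr eigenvectors Φ_{i,r+j}^± this gives a complete eigendecomposition of L_R(N) on the tangent space, which has dimension (l+m)r − r². -/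
/-!
Split `ℝˡ = U ⊕ U_N ⊕ rest` and `ℝᵐ = V ⊕ V_N ⊕ rest`, where `U, V` are spanned by the singular
vectors of `R` and `U_N, V_N` by those of `N`. A tangent vector `X`, i.e. `(1 - P_U) X (1 - P_V) = 0`,
is the sum of `P_U X (1 - P_{V_N}) + (1 - P_U - P_{U_N}) X P_V` (`kernelProj`) and of its mixed
block `P_U X P_{V_N} + P_{U_N} X P_V` (`mixedProj`). The Weingarten map reads only the mixed
coefficients `u_{r+j}ᵀ X vᵢ` and `uᵢᵀ X v_{r+j}`, swapping them and scaling by `σ_{r+j}/σᵢ ≠ 0`, so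
on the tangent space it vanishes exactly on the range of `kernelProj`, which is `span (K1 ∪ K2)`,
while the mixed block lies in the span of the `Φ±`. All maps involved are idempotents `X ↦ A X B`,
whose ranks are the traces `tr A · tr B`.
-/

open Matrix

/-- The linear map `X ↦ A * X * B`. -/
def mulLeftRight {l m : ℕ} (A : Matrix (Fin l) (Fin l) ℝ) (B : Matrix (Fin m) (Fin m) ℝ) :
    Matrix (Fin l) (Fin m) ℝ →ₗ[ℝ] Matrix (Fin l) (Fin m) ℝ where
  toFun X := A * X * B
  map_add' X Y := by simp [Matrix.mul_add, Matrix.add_mul]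
  map_smul' c X := by simp [Matrix.mul_smul, Matrix.smul_mul]

section RankOne

variable {R n p q s : Type*} [CommRing R] [Fintype n] [Fintype p]

@[simp]
lemma vecMulVec_zero_right (a : q → R) : vecMulVec a (0 : s → R) = 0 :=
  Matrix.ext fun _ _ => mul_zero _

lemma vecMulVec_mul_mul_vecMulVec (a : q → R) (b : n → R) (X : Matrix n p R) (c : p → R)
    (d : s → R) : vecMulVec a b * X * vecMulVec c d = (b ⬝ᵥ X *ᵥ c) • vecMulVec a d := by
  rw [vecMulVec_mul, vecMulVec_mul_vecMulVec, dotProduct_mulVec, vecMulVec_smul]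

lemma dotProduct_vecMulVec_mulVec (x a : n → R) (b y : p → R) :
    x ⬝ᵥ vecMulVec a b *ᵥ y = (x ⬝ᵥ a) * (b ⬝ᵥ y) := by
  rw [vecMulVec_mulVec]; simp [dotProduct_smul, mul_comm]

lemma dotProduct_mul_mul_mulVec [Fintype q] [Fintype s] (x : q → R) (A : Matrix q n R)
    (X : Matrix n p R) (B : Matrix p s R) (y : s → R) :
    x ⬝ᵥ (A * X * B) *ᵥ y = x ᵥ* A ⬝ᵥ X *ᵥ (B *ᵥ y) := by
  rw [← mulVec_mulVec, ← mulVec_mulVec, dotProduct_mulVec]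

end RankOne

lemma Submodule.mem_of_smul_add_mem_of_smul_sub_mem {K M : Type*} [Field K] [CharZero K]
    [AddCommGroup M] [Module K M] {p : Submodule K M} {c : K} (hc : c ≠ 0) {x y : M}
    (hadd : c • (x + y) ∈ p) (hsub : c • (x - y) ∈ p) : x ∈ p ∧ y ∈ p := by
  have h2c : 2 * c ≠ 0 := mul_ne_zero two_ne_zero hc
  constructor
  · rw [← p.smul_mem_iff h2c]
    convert p.add_mem hadd hsub using 1
    module
  · rw [← p.smul_mem_iff h2c]
    convert p.sub_mem hadd hsub using 1
    module

section Orthonormal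

variable {n p ι κ : Type*}

/-- Orthonormality for the dot product: `n → ℝ` carries the sup norm, so Mathlib's `Orthonormal`
does not apply. -/
def IsOrthonormal [Fintype n] [DecidableEq ι] (f : ι → n → ℝ) : Prop :=
  ∀ i j, f i ⬝ᵥ f j = if i = j then 1 else 0

lemma IsOrthonormal.comp [Fintype n] [DecidableEq ι] [DecidableEq κ] {f : ι → n → ℝ}
    (hf : IsOrthonormal f) {e : κ → ι} (he : Function.Injective e) : IsOrthonormal (f ∘ e) :=
  fun i j => by simp [hf (e i) (e j), he.eq_iff]

variable [Fintype ι]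

def orthProj (f : ι → n → ℝ) : Matrix n n ℝ := ∑ i, vecMulVec (f i) (f i)

lemma transpose_orthProj (f : ι → n → ℝ) : (orthProj f)ᵀ = orthProj f := by
  simp [orthProj, transpose_sum, transpose_vecMulVec]

variable [Fintype n]

lemma orthProj_mulVec (f : ι → n → ℝ) (w : n → ℝ) :
    orthProj f *ᵥ w = ∑ i, (f i ⬝ᵥ w) • f i := by
  simp [orthProj, sum_mulVec, vecMulVec_mulVec]

lemma vecMul_orthProj (f : ι → n → ℝ) (w : n → ℝ) : w ᵥ* orthProj f = orthProj f *ᵥ w := by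
  rw [← vecMul_transpose, transpose_orthProj]

lemma dotProduct_orthProj_mulVec (f : ι → n → ℝ) (x y : n → ℝ) :
    x ⬝ᵥ orthProj f *ᵥ y = orthProj f *ᵥ x ⬝ᵥ y := by
  rw [dotProduct_mulVec, vecMul_orthProj]

lemma orthProj_mulVec_eq_zero {f : ι → n → ℝ} {w : n → ℝ} (h : ∀ i, f i ⬝ᵥ w = 0) :
    orthProj f *ᵥ w = 0 := by
  simp [orthProj_mulVec, h]

lemma orthProj_mul (f : ι → n → ℝ) (M : Matrix n p ℝ) :
    orthProj f * M = ∑ i, vecMulVec (f i) (f i ᵥ* M) := by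
  simp [orthProj, Matrix.sum_mul, vecMulVec_mul]

lemma mul_orthProj (M : Matrix p n ℝ) (f : ι → n → ℝ) :
    M * orthProj f = ∑ i, vecMulVec (M *ᵥ f i) (f i) := by
  simp [orthProj, Matrix.mul_sum, mul_vecMulVec]

lemma orthProj_mul_mul_orthProj [Fintype p] [Fintype κ] (f : ι → n → ℝ) (X : Matrix n p ℝ)
    (g : κ → p → ℝ) :
    orthProj f * X * orthProj g = ∑ i, ∑ j, (f i ⬝ᵥ X *ᵥ g j) • vecMulVec (f i) (g j) := by
  simp only [orthProj, Matrix.sum_mul, Matrix.mul_sum, vecMulVec_mul_mul_vecMulVec]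
  exact Finset.sum_comm

lemma orthProj_mul_orthProj_eq_zero [Fintype κ] {f : ι → n → ℝ} {g : κ → n → ℝ}
    (h : ∀ i j, f i ⬝ᵥ g j = 0) : orthProj f * orthProj g = 0 := by
  have (i : ι) : orthProj g *ᵥ f i = 0 :=
    orthProj_mulVec_eq_zero fun j => by rw [dotProduct_comm, h]
  simp [orthProj_mul, vecMul_orthProj, this]

variable [DecidableEq ι] {f : ι → n → ℝ}

lemma IsOrthonormal.orthProj_mulVec_self (hf : IsOrthonormal f) (i : ι) :
    orthProj f *ᵥ f i = f i := by
  simp [orthProj_mulVec, hf _ i]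

lemma IsOrthonormal.isIdempotentElem_orthProj (hf : IsOrthonormal f) :
    IsIdempotentElem (orthProj f) := by
  rw [IsIdempotentElem, orthProj_mul]
  simp only [vecMul_orthProj, hf.orthProj_mulVec_self]
  rfl

lemma IsOrthonormal.trace_orthProj (hf : IsOrthonormal f) :
    (orthProj f).trace = Fintype.card ι := by
  simp [orthProj, trace_sum, trace_vecMulVec, fun i => hf i i]

lemma IsOrthonormal.sum_smul_vecMulVec_mulVec_eq_zero_iff [Fintype p] (hf : IsOrthonormal f)
    (g : ι → p → ℝ) {c : ι → ℝ} (hc : ∀ i, c i ≠ 0) (w : p → ℝ) :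
    (∑ i, c i • vecMulVec (f i) (g i)) *ᵥ w = 0 ↔ ∀ i, g i ⬝ᵥ w = 0 := by
  refine ⟨fun h i => ?_, fun h => by simp [sum_mulVec, Matrix.smul_mulVec, vecMulVec_mulVec, h]⟩
  have := congrArg (f i ⬝ᵥ ·) h
  simp [sum_mulVec, dotProduct_sum, Matrix.smul_mulVec, dotProduct_vecMulVec_mulVec, hf i] at this
  exact this.resolve_left (hc i)

end Orthonormal

section MulLeftRight

variable {l m : ℕ}

@[simp]
lemma mulLeftRight_apply (A : Matrix (Fin l) (Fin l) ℝ) (B : Matrix (Fin m) (Fin m) ℝ)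
    (X : Matrix (Fin l) (Fin m) ℝ) : mulLeftRight A B X = A * X * B := rfl

lemma mulLeftRight_mul_mulLeftRight (A A' : Matrix (Fin l) (Fin l) ℝ)
    (B B' : Matrix (Fin m) (Fin m) ℝ) :
    mulLeftRight A B * mulLeftRight A' B' = mulLeftRight (A * A') (B' * B) := by
  ext1 X
  simp [Matrix.mul_assoc]

@[simp]
lemma mulLeftRight_zero_left (B : Matrix (Fin m) (Fin m) ℝ) :
    mulLeftRight (0 : Matrix (Fin l) (Fin l) ℝ) B = 0 := by
  ext1 X; simp

@[simp]
lemma mulLeftRight_zero_right (A : Matrix (Fin l) (Fin l) ℝ) :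
    mulLeftRight A (0 : Matrix (Fin m) (Fin m) ℝ) = 0 := by
  ext1 X; simp

lemma IsIdempotentElem.mulLeftRight {A : Matrix (Fin l) (Fin l) ℝ}
    {B : Matrix (Fin m) (Fin m) ℝ} (hA : IsIdempotentElem A) (hB : IsIdempotentElem B) :
    IsIdempotentElem (mulLeftRight A B) := by
  rw [IsIdempotentElem, mulLeftRight_mul_mulLeftRight, hA.eq, hB.eq]

lemma trace_mulLeftRight (A : Matrix (Fin l) (Fin l) ℝ) (B : Matrix (Fin m) (Fin m) ℝ) :
    LinearMap.trace ℝ _ (mulLeftRight A B) = A.trace * B.trace := by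
  rw [LinearMap.trace_eq_matrix_trace ℝ (Matrix.stdBasis ℝ (Fin l) (Fin m)), Matrix.trace,
    Fintype.sum_prod_type, trace, trace, Finset.sum_mul_sum]
  refine Finset.sum_congr rfl fun i _ => Finset.sum_congr rfl fun j _ => ?_
  simp [LinearMap.toMatrix_apply, Matrix.stdBasis, Pi.basis_repr, Matrix.mul_apply,
    Pi.single_apply, ite_apply]

end MulLeftRight

/-- `uR i, vR i` are the singular vectors `uᵢ, vᵢ` of `R` (`i ≤ r`), and `uN j, vN j` those of the
normal vector, `u_{r+j}, v_{r+j}`. -/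
structure SingularFrame (l m : ℕ) (ι κ : Type*) [DecidableEq ι] [DecidableEq κ] where
  uR : ι → Fin l → ℝ
  vR : ι → Fin m → ℝ
  uN : κ → Fin l → ℝ
  vN : κ → Fin m → ℝ
  orthonormal_uR : IsOrthonormal uR
  orthonormal_vR : IsOrthonormal vR
  orthonormal_uN : IsOrthonormal uN
  orthonormal_vN : IsOrthonormal vN
  uR_dotProduct_uN : ∀ i j, uR i ⬝ᵥ uN j = 0
  vR_dotProduct_vN : ∀ i j, vR i ⬝ᵥ vN j = 0

namespace SingularFrame

def ofFinAdd {l m r k : ℕ} (u : Fin (r + k) → Fin l → ℝ) (v : Fin (r + k) → Fin m → ℝ)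
    (hu : IsOrthonormal u) (hv : IsOrthonormal v) : SingularFrame l m (Fin r) (Fin k) :=
  have castAdd_ne_natAdd (i : Fin r) (j : Fin k) : Fin.castAdd k i ≠ Fin.natAdd r j :=
    Fin.ne_of_lt (by simp [Fin.lt_def]; omega)
  { uR := u ∘ Fin.castAdd k
    vR := v ∘ Fin.castAdd k
    uN := u ∘ Fin.natAdd r
    vN := v ∘ Fin.natAdd r
    orthonormal_uR := hu.comp (Fin.castAdd_injective r k)
    orthonormal_vR := hv.comp (Fin.castAdd_injective r k)
    orthonormal_uN := hu.comp (Fin.natAdd_injective k r)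
    orthonormal_vN := hv.comp (Fin.natAdd_injective k r)
    uR_dotProduct_uN := fun i j => by simp [hu _ _, castAdd_ne_natAdd]
    vR_dotProduct_vN := fun i j => by simp [hv _ _, castAdd_ne_natAdd] }

variable {l m : ℕ} {ι κ : Type*} [DecidableEq ι] [DecidableEq κ] (F : SingularFrame l m ι κ)

lemma uN_dotProduct_uR (j : κ) (i : ι) : F.uN j ⬝ᵥ F.uR i = 0 := by
  rw [dotProduct_comm, F.uR_dotProduct_uN]

lemma vN_dotProduct_vR (j : κ) (i : ι) : F.vN j ⬝ᵥ F.vR i = 0 := by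
  rw [dotProduct_comm, F.vR_dotProduct_vN]

@[simp] lemma orthProj_uR_mulVec_uR [Fintype ι] (i : ι) : orthProj F.uR *ᵥ F.uR i = F.uR i :=
  F.orthonormal_uR.orthProj_mulVec_self i

@[simp] lemma orthProj_vR_mulVec_vR [Fintype ι] (i : ι) : orthProj F.vR *ᵥ F.vR i = F.vR i :=
  F.orthonormal_vR.orthProj_mulVec_self i

@[simp] lemma orthProj_uN_mulVec_uN [Fintype κ] (j : κ) : orthProj F.uN *ᵥ F.uN j = F.uN j :=
  F.orthonormal_uN.orthProj_mulVec_self j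

@[simp] lemma orthProj_vN_mulVec_vN [Fintype κ] (j : κ) : orthProj F.vN *ᵥ F.vN j = F.vN j :=
  F.orthonormal_vN.orthProj_mulVec_self j

@[simp] lemma orthProj_uR_mulVec_uN [Fintype ι] (j : κ) : orthProj F.uR *ᵥ F.uN j = 0 :=
  orthProj_mulVec_eq_zero fun i => F.uR_dotProduct_uN i j

@[simp] lemma orthProj_uN_mulVec_uR [Fintype κ] (i : ι) : orthProj F.uN *ᵥ F.uR i = 0 :=
  orthProj_mulVec_eq_zero fun j => F.uN_dotProduct_uR j i

def mixedEigenvectors : Set (Matrix (Fin l) (Fin m) ℝ) :=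
  {M | ∃ i j,
    M = (1 / Real.sqrt 2) • (vecMulVec (F.uN j) (F.vR i) + vecMulVec (F.uR i) (F.vN j)) ∨
    M = (1 / Real.sqrt 2) • (vecMulVec (F.uN j) (F.vR i) - vecMulVec (F.uR i) (F.vN j))}

lemma vecMulVec_mem_span_mixedEigenvectors (i : ι) (j : κ) :
    vecMulVec (F.uN j) (F.vR i) ∈ Submodule.span ℝ F.mixedEigenvectors ∧
      vecMulVec (F.uR i) (F.vN j) ∈ Submodule.span ℝ F.mixedEigenvectors :=
  Submodule.mem_of_smul_add_mem_of_smul_sub_mem (by positivity)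
    (Submodule.subset_span ⟨i, j, Or.inl rfl⟩) (Submodule.subset_span ⟨i, j, Or.inr rfl⟩)

section

variable [Fintype κ]

def normalMatrix (σN : κ → ℝ) : Matrix (Fin l) (Fin m) ℝ :=
  ∑ j, σN j • vecMulVec (F.uN j) (F.vN j)

lemma normalMatrix_mulVec_eq_zero_iff {σN : κ → ℝ} (hσN : ∀ j, σN j ≠ 0) (w : Fin m → ℝ) :
    F.normalMatrix σN *ᵥ w = 0 ↔ ∀ j, F.vN j ⬝ᵥ w = 0 :=
  F.orthonormal_uN.sum_smul_vecMulVec_mulVec_eq_zero_iff F.vN hσN w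

lemma vecMul_normalMatrix_eq_zero_iff {σN : κ → ℝ} (hσN : ∀ j, σN j ≠ 0) (w : Fin l → ℝ) :
    w ᵥ* F.normalMatrix σN = 0 ↔ ∀ j, F.uN j ⬝ᵥ w = 0 := by
  rw [← mulVec_transpose, normalMatrix, transpose_sum]
  simp only [transpose_smul, transpose_vecMulVec]
  exact F.orthonormal_vN.sum_smul_vecMulVec_mulVec_eq_zero_iff F.uN hσN w

end

section

variable [Fintype ι]

def normalProj : Module.End ℝ (Matrix (Fin l) (Fin m) ℝ) :=
  mulLeftRight (1 - orthProj F.uR) (1 - orthProj F.vR)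

def tangentSpace : Submodule ℝ (Matrix (Fin l) (Fin m) ℝ) := LinearMap.ker F.normalProj

lemma vecMulVec_uR_mem_tangentSpace (i : ι) (w : Fin m → ℝ) :
    vecMulVec (F.uR i) w ∈ F.tangentSpace := by
  simp [tangentSpace, normalProj, mul_vecMulVec, sub_mulVec]

lemma vecMulVec_vR_mem_tangentSpace (i : ι) (w : Fin l → ℝ) :
    vecMulVec w (F.vR i) ∈ F.tangentSpace := by
  simp [tangentSpace, normalProj, Matrix.mul_assoc, vecMulVec_mul, vecMul_sub, vecMul_orthProj]

lemma trace_normalProj :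
    LinearMap.trace ℝ _ F.normalProj = (l - Fintype.card ι) * (m - Fintype.card ι) := by
  rw [normalProj, trace_mulLeftRight, trace_sub, trace_sub, trace_one, trace_one,
    F.orthonormal_uR.trace_orthProj, F.orthonormal_vR.trace_orthProj, Fintype.card_fin,
    Fintype.card_fin]

theorem finrank_tangentSpace (hl : Fintype.card ι ≤ l) :
    Module.finrank ℝ F.tangentSpace =
      (l + m) * Fintype.card ι - Fintype.card ι * Fintype.card ι := by
  have hidem : IsIdempotentElem F.normalProj :=
    F.orthonormal_uR.isIdempotentElem_orthProj.one_sub.mulLeftRight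
      F.orthonormal_vR.isIdempotentElem_orthProj.one_sub
  have htrace := (LinearMap.IsIdempotentElem.isProj_range _ hidem.one_sub).trace
  rw [tangentSpace, LinearMap.IsIdempotentElem.ker_eq_range_one_sub hidem,
    ← Nat.cast_inj (R := ℝ), ← htrace, map_sub, LinearMap.trace_one, trace_normalProj,
    Module.finrank_matrix, Module.finrank_self, Fintype.card_fin, Fintype.card_fin,
    Nat.cast_sub (Nat.mul_le_mul_right _ (hl.trans (Nat.le_add_right l m)))]
  push_cast
  ring

end

variable [Fintype ι] [Fintype κ]

lemma orthProj_uR_mul_orthProj_uN : orthProj F.uR * orthProj F.uN = 0 :=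
  orthProj_mul_orthProj_eq_zero F.uR_dotProduct_uN

lemma orthProj_uN_mul_orthProj_uR : orthProj F.uN * orthProj F.uR = 0 :=
  orthProj_mul_orthProj_eq_zero F.uN_dotProduct_uR

def kernelProj : Module.End ℝ (Matrix (Fin l) (Fin m) ℝ) :=
  mulLeftRight (orthProj F.uR) (1 - orthProj F.vN) +
    mulLeftRight (1 - orthProj F.uR - orthProj F.uN) (orthProj F.vR)

def mixedProj : Module.End ℝ (Matrix (Fin l) (Fin m) ℝ) :=
  mulLeftRight (orthProj F.uR) (orthProj F.vN) + mulLeftRight (orthProj F.uN) (orthProj F.vR)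

noncomputable def weingarten (σR : ι → ℝ) (σN : κ → ℝ) (X : Matrix (Fin l) (Fin m) ℝ) :
    Matrix (Fin l) (Fin m) ℝ :=
  ∑ i, ∑ j, (σN j / σR i) •
    (vecMulVec (F.uR i) (F.vR i) * Xᵀ * vecMulVec (F.uN j) (F.vN j) +
      vecMulVec (F.uN j) (F.vN j) * Xᵀ * vecMulVec (F.uR i) (F.vR i))

def kernelGenerators (σN : κ → ℝ) : Set (Matrix (Fin l) (Fin m) ℝ) :=
  {M | ∃ i w, F.normalMatrix σN *ᵥ w = 0 ∧ M = vecMulVec (F.uR i) w} ∪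
    {M | ∃ i w, w ᵥ* F.normalMatrix σN = 0 ∧ (∀ i', w ⬝ᵥ F.uR i' = 0) ∧
      M = vecMulVec w (F.vR i)}

lemma kernelProj_add_mixedProj_add_normalProj :
    F.kernelProj + F.mixedProj + F.normalProj = 1 := by
  ext1 X
  simp only [kernelProj, mixedProj, normalProj, LinearMap.add_apply, mulLeftRight_apply,
    Module.End.one_apply, Matrix.mul_sub, Matrix.sub_mul, Matrix.mul_one, Matrix.one_mul]
  abel

lemma kernelProj_add_mixedProj_of_mem_tangentSpace {X : Matrix (Fin l) (Fin m) ℝ}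
    (hX : X ∈ F.tangentSpace) : F.kernelProj X + F.mixedProj X = X := by
  simpa [LinearMap.mem_ker.mp hX] using
    LinearMap.congr_fun F.kernelProj_add_mixedProj_add_normalProj X

lemma isIdempotentElem_kernelProj : IsIdempotentElem F.kernelProj := by
  have hU := F.orthonormal_uR.isIdempotentElem_orthProj
  have hUN := F.orthonormal_uN.isIdempotentElem_orthProj
  have hQ : IsIdempotentElem (1 - orthProj F.uR - orthProj F.uN) := by
    rw [sub_sub]
    exact (hU.add hUN (by simp [F.orthProj_uR_mul_orthProj_uN,
      F.orthProj_uN_mul_orthProj_uR])).one_sub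
  refine (hU.mulLeftRight F.orthonormal_vN.isIdempotentElem_orthProj.one_sub).add
    (hQ.mulLeftRight F.orthonormal_vR.isIdempotentElem_orthProj) ?_
  simp [mulLeftRight_mul_mulLeftRight, Matrix.mul_sub, Matrix.sub_mul, hU.eq,
    F.orthProj_uR_mul_orthProj_uN, F.orthProj_uN_mul_orthProj_uR]

lemma mixedProj_mul_kernelProj : F.mixedProj * F.kernelProj = 0 := by
  simp [mixedProj, kernelProj, mul_add, add_mul, mulLeftRight_mul_mulLeftRight, Matrix.mul_sub,
    Matrix.sub_mul, F.orthonormal_uR.isIdempotentElem_orthProj.eq,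
    F.orthonormal_uN.isIdempotentElem_orthProj.eq, F.orthonormal_vN.isIdempotentElem_orthProj.eq,
    F.orthProj_uR_mul_orthProj_uN, F.orthProj_uN_mul_orthProj_uR]

lemma mem_range_kernelProj_iff {X : Matrix (Fin l) (Fin m) ℝ} (hX : X ∈ F.tangentSpace) :
    X ∈ LinearMap.range F.kernelProj ↔ F.mixedProj X = 0 := by
  refine ⟨?_, fun h => ⟨X, ?_⟩⟩
  · rintro ⟨Y, rfl⟩
    exact LinearMap.congr_fun F.mixedProj_mul_kernelProj Y
  · simpa [h] using F.kernelProj_add_mixedProj_of_mem_tangentSpace hX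

lemma mixedProj_apply (X : Matrix (Fin l) (Fin m) ℝ) :
    F.mixedProj X = ∑ i, ∑ j, ((F.uR i ⬝ᵥ X *ᵥ F.vN j) • vecMulVec (F.uR i) (F.vN j) +
      (F.uN j ⬝ᵥ X *ᵥ F.vR i) • vecMulVec (F.uN j) (F.vR i)) := by
  simp only [mixedProj, LinearMap.add_apply, mulLeftRight_apply, orthProj_mul_mul_orthProj,
    Finset.sum_add_distrib]
  rw [Finset.sum_comm (γ := κ)]

lemma mixedProj_eq_zero_iff (X : Matrix (Fin l) (Fin m) ℝ) :
    F.mixedProj X = 0 ↔ ∀ i j, F.uR i ⬝ᵥ X *ᵥ F.vN j = 0 ∧ F.uN j ⬝ᵥ X *ᵥ F.vR i = 0 := by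
  refine ⟨fun h i j => ⟨?_, ?_⟩, fun h => by simp [mixedProj_apply, h]⟩
  · simpa [mixedProj, add_mulVec, dotProduct_mul_mul_mulVec, vecMul_orthProj] using
      congrArg (fun M => F.uR i ⬝ᵥ M *ᵥ F.vN j) h
  · simpa [mixedProj, add_mulVec, dotProduct_mul_mul_mulVec, vecMul_orthProj] using
      congrArg (fun M => F.uN j ⬝ᵥ M *ᵥ F.vR i) h

lemma weingarten_apply (σR : ι → ℝ) (σN : κ → ℝ) (X : Matrix (Fin l) (Fin m) ℝ) :
    F.weingarten σR σN X = ∑ i, ∑ j, (σN j / σR i) •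
      ((F.uN j ⬝ᵥ X *ᵥ F.vR i) • vecMulVec (F.uR i) (F.vN j) +
        (F.uR i ⬝ᵥ X *ᵥ F.vN j) • vecMulVec (F.uN j) (F.vR i)) := by
  simp only [weingarten, vecMulVec_mul_mul_vecMulVec, mulVec_transpose, ← dotProduct_mulVec,
    dotProduct_comm (F.vR _), dotProduct_comm (F.vN _)]

lemma dotProduct_weingarten_mulVec_vN (σR : ι → ℝ) (σN : κ → ℝ)
    (X : Matrix (Fin l) (Fin m) ℝ) (i : ι) (j : κ) :
    F.uR i ⬝ᵥ F.weingarten σR σN X *ᵥ F.vN j = (σN j / σR i) * (F.uN j ⬝ᵥ X *ᵥ F.vR i) := by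
  simp [weingarten_apply, sum_mulVec, dotProduct_sum, add_mulVec, Matrix.smul_mulVec,
    dotProduct_smul, dotProduct_vecMulVec_mulVec, F.orthonormal_uR i, F.orthonormal_vN _ j,
    F.uR_dotProduct_uN, F.vR_dotProduct_vN]

lemma dotProduct_weingarten_mulVec_vR (σR : ι → ℝ) (σN : κ → ℝ)
    (X : Matrix (Fin l) (Fin m) ℝ) (i : ι) (j : κ) :
    F.uN j ⬝ᵥ F.weingarten σR σN X *ᵥ F.vR i = (σN j / σR i) * (F.uR i ⬝ᵥ X *ᵥ F.vN j) := by
  simp [weingarten_apply, sum_mulVec, dotProduct_sum, add_mulVec, Matrix.smul_mulVec,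
    dotProduct_smul, dotProduct_vecMulVec_mulVec, F.orthonormal_uN j, F.orthonormal_vR _ i,
    F.uN_dotProduct_uR, F.vN_dotProduct_vR]

lemma weingarten_eq_zero_iff_mixedProj_eq_zero {σR : ι → ℝ} {σN : κ → ℝ}
    (hσR : ∀ i, σR i ≠ 0) (hσN : ∀ j, σN j ≠ 0) (X : Matrix (Fin l) (Fin m) ℝ) :
    F.weingarten σR σN X = 0 ↔ F.mixedProj X = 0 := by
  have hσ (i : ι) (j : κ) : σN j / σR i ≠ 0 := div_ne_zero (hσN j) (hσR i)
  rw [mixedProj_eq_zero_iff]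
  refine ⟨fun h i j => ⟨?_, ?_⟩, fun h => by simp [weingarten_apply, h]⟩
  · have := F.dotProduct_weingarten_mulVec_vR σR σN X i j
    rwa [h, zero_mulVec, dotProduct_zero, eq_comm, mul_eq_zero, or_iff_right (hσ i j)] at this
  · have := F.dotProduct_weingarten_mulVec_vN σR σN X i j
    rwa [h, zero_mulVec, dotProduct_zero, eq_comm, mul_eq_zero, or_iff_right (hσ i j)] at this

lemma kernelProj_vecMulVec_uR (i : ι) {w : Fin m → ℝ} (hw : ∀ j, F.vN j ⬝ᵥ w = 0) :
    F.kernelProj (vecMulVec (F.uR i) w) = vecMulVec (F.uR i) w := by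
  simp [kernelProj, mul_vecMulVec, vecMulVec_mul, sub_mulVec, vecMul_sub, vecMul_orthProj,
    orthProj_mulVec_eq_zero hw]

lemma kernelProj_vecMulVec_vR (i : ι) {w : Fin l → ℝ} (hwN : ∀ j, F.uN j ⬝ᵥ w = 0)
    (hwR : ∀ i, F.uR i ⬝ᵥ w = 0) :
    F.kernelProj (vecMulVec w (F.vR i)) = vecMulVec w (F.vR i) := by
  simp [kernelProj, mul_vecMulVec, vecMulVec_mul, sub_mulVec, vecMul_orthProj,
    orthProj_mulVec_eq_zero hwN, orthProj_mulVec_eq_zero hwR]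

lemma span_kernelGenerators {σN : κ → ℝ} (hσN : ∀ j, σN j ≠ 0) :
    Submodule.span ℝ (F.kernelGenerators σN) = LinearMap.range F.kernelProj := by
  refine le_antisymm (Submodule.span_le.2 ?_) ?_
  · rintro M (⟨i, w, hw, rfl⟩ | ⟨i, w, hw, hwR, rfl⟩)
    · rw [F.normalMatrix_mulVec_eq_zero_iff hσN] at hw
      exact ⟨_, F.kernelProj_vecMulVec_uR i hw⟩
    · rw [F.vecMul_normalMatrix_eq_zero_iff hσN] at hw
      exact ⟨_, F.kernelProj_vecMulVec_vR i hw fun i' => by rw [dotProduct_comm, hwR]⟩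
  · rintro _ ⟨Y, rfl⟩
    rw [kernelProj, LinearMap.add_apply, mulLeftRight_apply, mulLeftRight_apply,
      Matrix.mul_assoc, orthProj_mul, mul_orthProj]
    refine add_mem (sum_mem fun i _ => Submodule.subset_span (Or.inl ⟨i, _, ?_, rfl⟩))
      (sum_mem fun i _ => Submodule.subset_span (Or.inr ⟨i, _, ?_, fun i' => ?_, rfl⟩))
    · rw [F.normalMatrix_mulVec_eq_zero_iff hσN]
      intro j
      simp [dotProduct_comm (F.vN j), ← vecMul_vecMul, vecMul_sub, vecMul_orthProj,
        ← dotProduct_orthProj_mulVec]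
    · rw [F.vecMul_normalMatrix_eq_zero_iff hσN]
      intro j
      simp [← mulVec_mulVec, sub_mulVec, dotProduct_orthProj_mulVec]
    · simp [dotProduct_comm _ (F.uR i'), ← mulVec_mulVec, sub_mulVec, dotProduct_orthProj_mulVec]

lemma trace_kernelProj :
    LinearMap.trace ℝ _ F.kernelProj = Fintype.card ι * (m - Fintype.card κ) +
      (l - Fintype.card ι - Fintype.card κ) * Fintype.card ι := by
  rw [kernelProj, map_add, trace_mulLeftRight, trace_mulLeftRight, trace_sub, trace_sub,
    trace_sub, trace_one, trace_one, F.orthonormal_uR.trace_orthProj,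
    F.orthonormal_uN.trace_orthProj, F.orthonormal_vR.trace_orthProj,
    F.orthonormal_vN.trace_orthProj, Fintype.card_fin, Fintype.card_fin]

theorem weingarten_eq_zero_iff_mem_span {σR : ι → ℝ} {σN : κ → ℝ} (hσR : ∀ i, σR i ≠ 0)
    (hσN : ∀ j, σN j ≠ 0) {X : Matrix (Fin l) (Fin m) ℝ} (hX : X ∈ F.tangentSpace) :
    F.weingarten σR σN X = 0 ↔ X ∈ Submodule.span ℝ (F.kernelGenerators σN) := by
  rw [F.weingarten_eq_zero_iff_mixedProj_eq_zero hσR hσN, F.span_kernelGenerators hσN,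
    F.mem_range_kernelProj_iff hX]

theorem tangentSpace_eq_sup {σN : κ → ℝ} (hσN : ∀ j, σN j ≠ 0) :
    F.tangentSpace =
      Submodule.span ℝ (F.kernelGenerators σN) ⊔ Submodule.span ℝ F.mixedEigenvectors := by
  refine le_antisymm (fun X hX => ?_) (sup_le (Submodule.span_le.2 ?_) (Submodule.span_le.2 ?_))
  · rw [← F.kernelProj_add_mixedProj_of_mem_tangentSpace hX, F.span_kernelGenerators hσN,
      mixedProj_apply]
    refine add_mem (Submodule.mem_sup_left ⟨X, rfl⟩) (Submodule.mem_sup_right ?_)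
    exact sum_mem fun i _ => sum_mem fun j _ =>
      add_mem (Submodule.smul_mem _ _ (F.vecMulVec_mem_span_mixedEigenvectors i j).2)
        (Submodule.smul_mem _ _ (F.vecMulVec_mem_span_mixedEigenvectors i j).1)
  · rintro M (⟨i, w, -, rfl⟩ | ⟨i, w, -, -, rfl⟩)
    exacts [F.vecMulVec_uR_mem_tangentSpace i w, F.vecMulVec_vR_mem_tangentSpace i w]
  · rintro M ⟨i, j, rfl | rfl⟩
    · exact Submodule.smul_mem _ _
        (add_mem (F.vecMulVec_vR_mem_tangentSpace i _) (F.vecMulVec_uR_mem_tangentSpace i _))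
    · exact Submodule.smul_mem _ _
        (sub_mem (F.vecMulVec_vR_mem_tangentSpace i _) (F.vecMulVec_uR_mem_tangentSpace i _))

theorem finrank_span_kernelGenerators {σN : κ → ℝ} (hσN : ∀ j, σN j ≠ 0)
    (hl : Fintype.card ι + Fintype.card κ ≤ l) (hm : Fintype.card κ ≤ m) :
    Module.finrank ℝ (Submodule.span ℝ (F.kernelGenerators σN)) =
      (m - Fintype.card κ) * Fintype.card ι + (l - Fintype.card κ - Fintype.card ι) *
        Fintype.card ι := by
  have htrace :=
    (LinearMap.IsIdempotentElem.isProj_range _ F.isIdempotentElem_kernelProj).trace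
  rw [F.span_kernelGenerators hσN, ← Nat.cast_inj (R := ℝ), ← htrace, trace_kernelProj,
    Nat.cast_add, Nat.cast_mul, Nat.cast_mul, Nat.cast_sub hm, Nat.cast_sub (by omega),
    Nat.cast_sub (le_of_add_le_right hl)]
  ring

end SingularFrame

/-- Kernel of the Weingarten map and the complete eigendecomposition on the tangent space:
the kernel of `L_R(N)` restricted to the tangent space is
`span{uᵢvᵀ : Nv = 0} ⊕ span{uvᵢᵀ : uᵀN = 0, uᵀU = 0}` of dimension `(m−k)r + (l−k−r)r`;
together with the `2kr` eigenvectors `Φ±` it spans the whole tangent space, whose dimension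
is `(l+m)r − r²`. -/
theorem weingarten_kernel_and_eigendecomposition
    (l m r k : ℕ) (hlk : r + k ≤ l) (hmk : r + k ≤ m)
    (u : Fin (r + k) → Fin l → ℝ) (v : Fin (r + k) → Fin m → ℝ) (σ : Fin (r + k) → ℝ)
    (hu : ∀ i j, dotProduct (u i) (u j) = if i = j then 1 else 0)
    (hv : ∀ i j, dotProduct (v i) (v j) = if i = j then 1 else 0)
    (hσ : ∀ i, 0 < σ i)
    (N : Matrix (Fin l) (Fin m) ℝ)
    (hN : N = ∑ j : Fin k,
      σ (Fin.natAdd r j) • vecMulVec (u (Fin.natAdd r j)) (v (Fin.natAdd r j))) :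
    let PU : Matrix (Fin l) (Fin l) ℝ :=
      ∑ i : Fin r, vecMulVec (u (Fin.castAdd k i)) (u (Fin.castAdd k i))
    let PV : Matrix (Fin m) (Fin m) ℝ :=
      ∑ i : Fin r, vecMulVec (v (Fin.castAdd k i)) (v (Fin.castAdd k i))
    -- tangent space at `R`, as the kernel of `X ↦ (1−PU) X (1−PV)`
    let T : Submodule ℝ (Matrix (Fin l) (Fin m) ℝ) :=
      LinearMap.ker (mulLeftRight (1 - PU) (1 - PV))
    let L : Matrix (Fin l) (Fin m) ℝ → Matrix (Fin l) (Fin m) ℝ := fun X =>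
      ∑ i : Fin r, ∑ j : Fin k,
        (σ (Fin.natAdd r j) / σ (Fin.castAdd k i)) •
          (vecMulVec (u (Fin.castAdd k i)) (v (Fin.castAdd k i)) * Xᵀ *
              vecMulVec (u (Fin.natAdd r j)) (v (Fin.natAdd r j)) +
            vecMulVec (u (Fin.natAdd r j)) (v (Fin.natAdd r j)) * Xᵀ *
              vecMulVec (u (Fin.castAdd k i)) (v (Fin.castAdd k i)))
    let K1 : Set (Matrix (Fin l) (Fin m) ℝ) :=
      {M | ∃ (i : Fin r) (w : Fin m → ℝ), N.mulVec w = 0 ∧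
        M = vecMulVec (u (Fin.castAdd k i)) w}
    let K2 : Set (Matrix (Fin l) (Fin m) ℝ) :=
      {M | ∃ (i : Fin r) (w : Fin l → ℝ), Matrix.vecMul w N = 0 ∧
        (∀ i' : Fin r, dotProduct w (u (Fin.castAdd k i')) = 0) ∧
        M = vecMulVec w (v (Fin.castAdd k i))}
    let Φs : Set (Matrix (Fin l) (Fin m) ℝ) :=
      {M | ∃ (i : Fin r) (j : Fin k),
        M = (1 / Real.sqrt 2) •
          (vecMulVec (u (Fin.natAdd r j)) (v (Fin.castAdd k i)) +
            vecMulVec (u (Fin.castAdd k i)) (v (Fin.natAdd r j))) ∨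
        M = (1 / Real.sqrt 2) •
          (vecMulVec (u (Fin.natAdd r j)) (v (Fin.castAdd k i)) -
            vecMulVec (u (Fin.castAdd k i)) (v (Fin.natAdd r j)))}
    (∀ X ∈ T, (L X = 0 ↔ X ∈ Submodule.span ℝ (K1 ∪ K2))) ∧
    Module.finrank ℝ (Submodule.span ℝ (K1 ∪ K2)) = (m - k) * r + (l - k - r) * r ∧
    T = Submodule.span ℝ (K1 ∪ K2) ⊔ Submodule.span ℝ Φs ∧
    Module.finrank ℝ T = (l + m) * r - r * r := by
  intro PU PV T L K1 K2 Φs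
  subst hN
  let F := SingularFrame.ofFinAdd u v hu hv
  have hσR (i : Fin r) : σ (Fin.castAdd k i) ≠ 0 := (hσ _).ne'
  have hσN (j : Fin k) : σ (Fin.natAdd r j) ≠ 0 := (hσ _).ne'
  have hrank := F.finrank_span_kernelGenerators hσN (by simpa using hlk)
    (by simpa using le_of_add_le_right hmk)
  have hdim := F.finrank_tangentSpace (by simpa using le_of_add_le_left hlk)
  simp only [Fintype.card_fin] at hrank hdim
  exact ⟨fun X hX => F.weingarten_eq_zero_iff_mem_span hσR hσN hX, hrank,
    F.tangentSpace_eq_sup hσN, hdim⟩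
end

section
/- For any two rank-r matrices R¹, R² ∈ ℝ^{l×m}, the orthogonal projections onto their tangent spaces satisfy ‖Π_{T_{R¹}} − Π_{T_{R²}}‖ ≤ min(1, (2/σ_r(R¹)) ‖R¹ − R²‖), where the left-hand norm is the operator norm on ℝ^{l×m} with the Frobenius norm, and σ_r(R¹) is the smallest nonzero singular value of R¹. -/
open Matrix

/-- Frobenius norm of a real matrix. -/
noncomputable def fnorm {l m : ℕ} (A : Matrix (Fin l) (Fin m) ℝ) : ℝ :=
  Real.sqrt (Matrix.trace (Aᵀ * A))

/-!
Write `P = Π_U`, `Q = Π_V` for the projections onto the column and row spaces, so that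
`Π_T X = X - P^⊥ X Q^⊥`. Then `Π_{T₁} - Π_{T₂}` is the difference of the orthogonal projections
`X ↦ P₂^⊥ X Q₂^⊥` and `X ↦ P₁^⊥ X Q₁^⊥` of the Frobenius space, hence has norm at most `1`, and
splitting it as `(P₁ - P₂) X Q₂^⊥ + P₁^⊥ X (Q₁ - Q₂)` bounds it by `‖P₁ - P₂‖ + ‖Q₁ - Q₂‖`.

For orthogonal projections of equal rank, `‖P₁ - P₂‖ = ‖P₂^⊥ P₁‖`: the sine of the largest
principal angle is symmetric in the two subspaces when their dimensions agree. Writing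
`P₁ = R₁ (V Σ⁻¹ Uᵀ)` and using `P₂^⊥ R₂ = 0` gives `P₂^⊥ P₁ = P₂^⊥ (R₁ - R₂) V Σ⁻¹ Uᵀ`, whose norm
is at most `‖R₁ - R₂‖ / σ_r(R₁)`. The same argument bounds `‖Q₁ - Q₂‖` through the transposes.
-/

open Module WithLp
open scoped Matrix.Norms.L2Operator Kronecker

lemma Submodule.exists_mem_apply_eq_of_finrank_eq {K V W : Type*} [DivisionRing K]
    [AddCommGroup V] [Module K V] [AddCommGroup W] [Module K W] {f : V →ₗ[K] W}
    {S : Submodule K V} {T : Submodule K W} [FiniteDimensional K T]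
    (hmaps : ∀ v ∈ S, f v ∈ T) (hinj : ∀ v ∈ S, f v = 0 → v = 0)
    (hrank : finrank K S = finrank K T) {w : W} (hw : w ∈ T) : ∃ v ∈ S, f v = w := by
  have hinj' : Function.Injective (f.domRestrict S) := by
    rw [← LinearMap.ker_eq_bot, LinearMap.ker_eq_bot']
    exact fun v hv => Subtype.ext (hinj v v.2 hv)
  have hrange : LinearMap.range (f.domRestrict S) = T := by
    refine Submodule.eq_of_le_of_finrank_eq ?_ ((LinearMap.finrank_range_of_inj hinj').trans hrank)
    rintro _ ⟨v, rfl⟩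
    exact hmaps v v.2
  obtain ⟨v, rfl⟩ := hrange ▸ hw
  exact ⟨v, v.2, rfl⟩

namespace IsStarProjection

variable {𝕜 E : Type*} [RCLike 𝕜] [NormedAddCommGroup E] [InnerProductSpace 𝕜 E]
  [CompleteSpace E] {p q : E →L[𝕜] E}

lemma apply_apply (hp : IsStarProjection p) (x : E) : p (p x) = p x := by
  rw [← mul_apply_eq_comp, hp.isIdempotentElem.eq]

lemma apply_of_mem_range (hp : IsStarProjection p) {v : E} (hv : v ∈ p.range) : p v = v := by
  obtain ⟨y, rfl⟩ := hv
  exact hp.apply_apply y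

lemma inner_apply_one_sub_apply (hp : IsStarProjection p) (x y : E) :
    inner 𝕜 (p x) ((1 - p) y) = 0 :=
  calc inner 𝕜 (p x) ((1 - p) y) = inner 𝕜 x (p ((1 - p) y)) := hp.isSelfAdjoint.isSymmetric x _
    _ = 0 := by rw [← mul_apply_eq_comp, hp.mul_one_sub_self, _root_.zero_apply, inner_zero_right]

lemma norm_apply_sq_add_norm_one_sub_apply_sq (hp : IsStarProjection p) (x : E) :
    ‖p x‖ ^ 2 + ‖(1 - p) x‖ ^ 2 = ‖x‖ ^ 2 := by
  have h := norm_add_sq_eq_norm_sq_add_norm_sq_of_inner_eq_zero _ _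
    (hp.inner_apply_one_sub_apply x x)
  simp only [_root_.sub_apply, one_apply_eq_self, add_sub_cancel] at h ⊢
  linear_combination -h

lemma norm_mul_one_sub_comm (hp : IsStarProjection p) (hq : IsStarProjection q) :
    ‖p * (1 - q)‖ = ‖(1 - q) * p‖ := by
  rw [← norm_star, star_mul, hp.isSelfAdjoint.star_eq, hq.one_sub.isSelfAdjoint.star_eq]

lemma norm_sub_le_max (hp : IsStarProjection p) (hq : IsStarProjection q) :
    ‖p - q‖ ≤ max ‖(1 - q) * p‖ ‖(1 - p) * q‖ := by
  set t := max ‖(1 - q) * p‖ ‖(1 - p) * q‖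
  have ht : 0 ≤ t := le_max_of_le_left (norm_nonneg _)
  refine ContinuousLinearMap.opNorm_le_bound _ ht fun x => ?_
  have hsplit : (p - q) x = p ((1 - q) x) - (1 - p) (q x) := by
    simp only [_root_.sub_apply, one_apply_eq_self, map_sub]
    abel
  have h₁ : ‖p ((1 - q) x)‖ ≤ t * ‖(1 - q) x‖ := by
    have := (p * (1 - q)).le_opNorm ((1 - q) x)
    rw [mul_apply_eq_comp, ← mul_apply_eq_comp (1 - q), hq.one_sub.isIdempotentElem.eq,
      hp.norm_mul_one_sub_comm hq] at this
    exact this.trans (mul_le_mul_of_nonneg_right (le_max_left _ _) (norm_nonneg _))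
  have h₂ : ‖(1 - p) (q x)‖ ≤ t * ‖q x‖ := by
    have := ((1 - p) * q).le_opNorm (q x)
    rw [mul_apply_eq_comp, hq.apply_apply] at this
    exact this.trans (mul_le_mul_of_nonneg_right (le_max_right _ _) (norm_nonneg _))
  have hx := hq.norm_apply_sq_add_norm_one_sub_apply_sq x
  refine (pow_le_pow_iff_left₀ (norm_nonneg _) (by positivity) two_ne_zero).mp ?_
  rw [hsplit, norm_sub_sq (𝕜 := 𝕜), hp.inner_apply_one_sub_apply, map_zero]
  have h₁' := pow_le_pow_left₀ (norm_nonneg _) h₁ 2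
  have h₂' := pow_le_pow_left₀ (norm_nonneg _) h₂ 2
  rw [mul_pow] at h₁' h₂' ⊢
  nlinarith

lemma norm_one_sub_mul_le_one (hp : IsStarProjection p) (hq : IsStarProjection q) :
    ‖(1 - p) * q‖ ≤ 1 :=
  (norm_mul_le _ _).trans (mul_le_one₀ hp.one_sub.norm_le (norm_nonneg _) hq.norm_le)

lemma norm_sub_le_one (hp : IsStarProjection p) (hq : IsStarProjection q) : ‖p - q‖ ≤ 1 :=
  (hp.norm_sub_le_max hq).trans
    (max_le (hq.norm_one_sub_mul_le_one hp) (hp.norm_one_sub_mul_le_one hq))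

lemma mul_norm_apply_sq_le_norm_apply_apply_sq (hp : IsStarProjection p) (hq : IsStarProjection q)
    {c : ℝ} (hc : 0 ≤ c) {v : E} (hv : v ∈ p.range) (hlow : c * ‖v‖ ^ 2 ≤ ‖q v‖ ^ 2) :
    c * ‖q v‖ ^ 2 ≤ ‖p (q v)‖ ^ 2 := by
  have hinner : ‖q v‖ ^ 2 ≤ ‖p (q v)‖ * ‖v‖ :=
    calc ‖q v‖ ^ 2 = RCLike.re (inner 𝕜 (q v) (q v)) := (inner_self_eq_norm_sq _).symm
      _ = RCLike.re (inner 𝕜 (q (q v)) v) :=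
        congrArg _ (hq.isSelfAdjoint.isSymmetric (q v) v).symm
      _ = RCLike.re (inner 𝕜 (q v) (p v)) := by rw [hq.apply_apply, hp.apply_of_mem_range hv]
      _ = RCLike.re (inner 𝕜 (p (q v)) v) :=
        congrArg _ (hp.isSelfAdjoint.isSymmetric (q v) v).symm
      _ ≤ ‖p (q v)‖ * ‖v‖ := re_inner_le_norm _ _
  rcases (norm_nonneg (q v)).eq_or_lt with h0 | hpos
  · rw [← h0]; simp
  refine le_of_mul_le_mul_right ?_ (pow_pos hpos 2)
  calc c * ‖q v‖ ^ 2 * ‖q v‖ ^ 2 = c * (‖q v‖ ^ 2) ^ 2 := by ring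
    _ ≤ c * (‖p (q v)‖ * ‖v‖) ^ 2 := by gcongr
    _ = ‖p (q v)‖ ^ 2 * (c * ‖v‖ ^ 2) := by ring
    _ ≤ ‖p (q v)‖ ^ 2 * ‖q v‖ ^ 2 := by gcongr

lemma norm_one_sub_mul_le_of_finrank_range_eq [FiniteDimensional 𝕜 E]
    (hp : IsStarProjection p) (hq : IsStarProjection q)
    (hrank : finrank 𝕜 p.range = finrank 𝕜 q.range) :
    ‖(1 - p) * q‖ ≤ ‖(1 - q) * p‖ := by
  set t := ‖(1 - q) * p‖
  rcases le_or_gt 1 t with ht | ht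
  · exact (hp.norm_one_sub_mul_le_one hq).trans ht
  have hc : 0 < 1 - t ^ 2 := by nlinarith [norm_nonneg ((1 - q) * p)]
  have hlow : ∀ v ∈ p.range, (1 - t ^ 2) * ‖v‖ ^ 2 ≤ ‖q v‖ ^ 2 := by
    intro v hv
    have h := ((1 - q) * p).le_opNorm v
    rw [mul_apply_eq_comp, hp.apply_of_mem_range hv] at h
    have h' := pow_le_pow_left₀ (norm_nonneg _) h 2
    nlinarith [hq.norm_apply_sq_add_norm_one_sub_apply_sq v]
  -- Being injective on `range p`, `q` maps it onto `range q`, which has the same dimension.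
  have honto : ∀ w ∈ q.range, ∃ v ∈ p.range, q v = w := by
    refine fun w hw => Submodule.exists_mem_apply_eq_of_finrank_eq (f := (q : E →ₗ[𝕜] E))
      (fun v _ => q.mem_range_self v) (fun v hv hqv => ?_) hrank hw
    have := hlow v hv
    rw [ContinuousLinearMap.coe_coe] at hqv
    rw [hqv, norm_zero] at this
    have : ‖v‖ ^ 2 ≤ 0 := by nlinarith
    simpa using this
  refine ContinuousLinearMap.opNorm_le_bound _ (norm_nonneg _) fun x => ?_
  obtain ⟨v, hv, hqv⟩ := honto (q x) (q.mem_range_self x)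
  have h := hp.mul_norm_apply_sq_le_norm_apply_apply_sq hq hc.le hv (hlow v hv)
  rw [hqv] at h
  have hpy := hp.norm_apply_sq_add_norm_one_sub_apply_sq (q x)
  have hqx := hq.norm_apply_sq_add_norm_one_sub_apply_sq x
  refine (pow_le_pow_iff_left₀ (norm_nonneg _) (by positivity) two_ne_zero).mp ?_
  rw [mul_apply_eq_comp, mul_pow]
  nlinarith [sq_nonneg t, norm_nonneg ((1 - q) x)]

lemma norm_sub_le_of_finrank_range_eq [FiniteDimensional 𝕜 E] (hp : IsStarProjection p)
    (hq : IsStarProjection q) (hrank : finrank 𝕜 p.range = finrank 𝕜 q.range) :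
    ‖p - q‖ ≤ ‖(1 - q) * p‖ :=
  (hp.norm_sub_le_max hq).trans
    (max_le le_rfl (hp.norm_one_sub_mul_le_of_finrank_range_eq hq hrank))

end IsStarProjection

namespace Matrix

section StarProjection

variable {𝕜 n : Type*} [RCLike 𝕜] [Fintype n] [DecidableEq n]

lemma rank_eq_finrank_range_toEuclideanCLM (P : Matrix n n 𝕜) :
    P.rank = finrank 𝕜 (toEuclideanCLM (n := n) (𝕜 := 𝕜) P).range := by
  rw [rank_eq_finrank_range_toLin P (EuclideanSpace.basisFun n 𝕜).toBasis
    (EuclideanSpace.basisFun n 𝕜).toBasis, ← toEuclideanLin_eq_toLin_orthonormal]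
  rfl

lemma l2_opNorm_sub_le_one_of_isStarProjection {P Q : Matrix n n 𝕜} (hP : IsStarProjection P)
    (hQ : IsStarProjection Q) : ‖P - Q‖ ≤ 1 := by
  rw [← l2_opNorm_toEuclideanCLM, map_sub]
  exact (hP.map _).norm_sub_le_one (hQ.map _)

lemma l2_opNorm_sub_le_of_isStarProjection_of_rank_eq {P Q : Matrix n n 𝕜}
    (hP : IsStarProjection P) (hQ : IsStarProjection Q) (hrank : P.rank = Q.rank) :
    ‖P - Q‖ ≤ ‖(1 - Q) * P‖ := by
  rw [← l2_opNorm_toEuclideanCLM, ← l2_opNorm_toEuclideanCLM, map_sub, map_mul, map_sub, map_one]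
  rw [rank_eq_finrank_range_toEuclideanCLM, rank_eq_finrank_range_toEuclideanCLM] at hrank
  exact (hP.map _).norm_sub_le_of_finrank_range_eq (hQ.map _) hrank

end StarProjection

lemma isStarProjection_kronecker {R m n : Type*} [CommSemiring R] [StarRing R] [Fintype m]
    [Fintype n] {P : Matrix m m R} {Q : Matrix n n R} (hP : IsStarProjection P)
    (hQ : IsStarProjection Q) : IsStarProjection (P ⊗ₖ Q) where
  isIdempotentElem := by
    rw [IsIdempotentElem, ← mul_kronecker_mul, hP.isIdempotentElem.eq, hQ.isIdempotentElem.eq]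
  isSelfAdjoint := by
    rw [IsSelfAdjoint, star_eq_conjTranspose, conjTranspose_kronecker, ← star_eq_conjTranspose,
      ← star_eq_conjTranspose, hP.isSelfAdjoint.star_eq, hQ.isSelfAdjoint.star_eq]

lemma transpose_eq_of_isStarProjection {n : Type*} [Fintype n] {P : Matrix n n ℝ}
    (hP : IsStarProjection P) : Pᵀ = P := by
  rw [← conjTranspose_eq_transpose_of_trivial, ← star_eq_conjTranspose, hP.isSelfAdjoint.star_eq]

section RowOrthonormal

variable {k n : Type*} [DecidableEq k]

lemma of_mul_transpose_of_eq_one {R : Type*} [CommSemiring R] [Fintype n] {u : k → n → R}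
    (hu : ∀ i j, u i ⬝ᵥ u j = if i = j then 1 else 0) : of u * (of u)ᵀ = 1 := by
  ext i j
  simpa [mul_apply, one_apply, dotProduct] using hu i j

lemma transpose_of_mul_diagonal_mul_of {R p : Type*} [CommSemiring R] [Fintype k] (u : k → n → R)
    (σ : k → R) (v : k → p → R) :
    (of u)ᵀ * diagonal σ * of v = ∑ i, σ i • vecMulVec (u i) (v i) := by
  ext a b
  rw [Matrix.mul_assoc, mul_apply]
  simp only [diagonal_mul, transpose_apply, of_apply, Matrix.sum_apply, smul_apply,
    vecMulVec_apply, smul_eq_mul]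
  exact Finset.sum_congr rfl fun _ _ => by ring

lemma transpose_of_mul_of {R : Type*} [CommSemiring R] [Fintype k] (u : k → n → R) :
    (of u)ᵀ * of u = ∑ i, vecMulVec (u i) (u i) := by
  simpa using transpose_of_mul_diagonal_mul_of u 1 u

variable [Fintype k] [Fintype n]

lemma l2_opNorm_le_one_of_mul_transpose_eq_one [DecidableEq n] {A : Matrix k n ℝ}
    (hA : A * Aᵀ = 1) : ‖A‖ ≤ 1 := by
  have h : ‖A‖ * ‖A‖ ≤ 1 := by
    rw [← l2_opNorm_conjTranspose, ← l2_opNorm_conjTranspose_mul_self, conjTranspose_conjTranspose,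
      conjTranspose_eq_transpose_of_trivial, hA, ← l2_opNorm_toEuclideanCLM, map_one]
    exact ContinuousLinearMap.norm_id_le
  nlinarith [norm_nonneg A]

lemma l2_opNorm_transpose_le_one_of_mul_transpose_eq_one [DecidableEq n] {A : Matrix k n ℝ}
    (hA : A * Aᵀ = 1) : ‖Aᵀ‖ ≤ 1 := by
  rw [← conjTranspose_eq_transpose_of_trivial, l2_opNorm_conjTranspose]
  exact l2_opNorm_le_one_of_mul_transpose_eq_one hA

lemma isStarProjection_transpose_mul_self {A : Matrix k n ℝ} (hA : A * Aᵀ = 1) :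
    IsStarProjection (Aᵀ * A) where
  isIdempotentElem := by
    rw [IsIdempotentElem, Matrix.mul_assoc, ← Matrix.mul_assoc A, hA, Matrix.one_mul]
  isSelfAdjoint := by
    rw [IsSelfAdjoint, star_eq_conjTranspose, conjTranspose_eq_transpose_of_trivial, transpose_mul,
      transpose_transpose]

lemma isStarProjection_sum_vecMulVec_self {u : k → n → ℝ}
    (hu : ∀ i j, u i ⬝ᵥ u j = if i = j then 1 else 0) :
    IsStarProjection (∑ i, vecMulVec (u i) (u i)) :=
  transpose_of_mul_of u ▸ isStarProjection_transpose_mul_self (of_mul_transpose_of_eq_one hu)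

lemma rank_transpose_mul_self_of_mul_transpose_eq_one {A : Matrix k n ℝ} (hA : A * Aᵀ = 1) :
    (Aᵀ * A).rank = Fintype.card k := by
  refine (rank_transpose_mul_self A).trans (le_antisymm (rank_le_card_height A) ?_)
  calc Fintype.card k = (A * Aᵀ).rank := by rw [hA, rank_one]
    _ ≤ A.rank := rank_mul_le_left A Aᵀ

end RowOrthonormal

end Matrix

section Frobenius

variable {k l m : ℕ}

lemma fnorm_eq_norm_vec (X : Matrix (Fin l) (Fin m) ℝ) :
    fnorm X = ‖(toLp 2 (vec X) : EuclideanSpace ℝ (Fin m × Fin l))‖ := by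
  rw [fnorm, EuclideanSpace.norm_eq, Fintype.sum_prod_type]
  simp [trace, mul_apply, vec, sq]

lemma fnorm_sq_eq_sum_norm_col_sq (X : Matrix (Fin l) (Fin m) ℝ) :
    fnorm X ^ 2 = ∑ j, ‖(toLp 2 (Xᵀ j) : EuclideanSpace ℝ (Fin l))‖ ^ 2 := by
  rw [fnorm_eq_norm_vec, EuclideanSpace.norm_sq_eq, Fintype.sum_prod_type]
  simp_rw [EuclideanSpace.norm_sq_eq]
  rfl

lemma fnorm_nonneg (X : Matrix (Fin l) (Fin m) ℝ) : 0 ≤ fnorm X := Real.sqrt_nonneg _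

lemma fnorm_transpose (X : Matrix (Fin l) (Fin m) ℝ) : fnorm Xᵀ = fnorm X := by
  rw [fnorm, fnorm, transpose_transpose, trace_mul_comm]

lemma fnorm_add_le (X Y : Matrix (Fin l) (Fin m) ℝ) : fnorm (X + Y) ≤ fnorm X + fnorm Y := by
  simp only [fnorm_eq_norm_vec, vec_add, toLp_add]
  exact norm_add_le _ _

lemma fnorm_mul_le_opNorm_mul (P : Matrix (Fin k) (Fin l) ℝ) (X : Matrix (Fin l) (Fin m) ℝ) :
    fnorm (P * X) ≤ ‖P‖ * fnorm X := by
  refine (pow_le_pow_iff_left₀ (fnorm_nonneg _) (by positivity [fnorm_nonneg X]) two_ne_zero).mp ?_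
  have hcol : ∀ j, (P * X)ᵀ j = P *ᵥ Xᵀ j := fun j => by
    ext i; simp [mul_apply, mulVec, dotProduct]
  rw [mul_pow, fnorm_sq_eq_sum_norm_col_sq, fnorm_sq_eq_sum_norm_col_sq, Finset.mul_sum]
  refine Finset.sum_le_sum fun j _ => ?_
  rw [hcol, ← mul_pow]
  exact pow_le_pow_left₀ (norm_nonneg _) (l2_opNorm_mulVec P _) 2

lemma fnorm_mul_mul_le {n : ℕ} (P : Matrix (Fin k) (Fin l) ℝ) (X : Matrix (Fin l) (Fin m) ℝ)
    (Q : Matrix (Fin m) (Fin n) ℝ) : fnorm (P * X * Q) ≤ ‖P‖ * fnorm X * ‖Q‖ :=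
  calc fnorm (P * X * Q) = fnorm (Qᵀ * (P * X)ᵀ) := by rw [← fnorm_transpose, transpose_mul]
    _ ≤ ‖Qᵀ‖ * fnorm (P * X)ᵀ := fnorm_mul_le_opNorm_mul _ _
    _ ≤ ‖Q‖ * (‖P‖ * fnorm X) := by
      rw [fnorm_transpose, ← conjTranspose_eq_transpose_of_trivial, l2_opNorm_conjTranspose]
      exact mul_le_mul_of_nonneg_left (fnorm_mul_le_opNorm_mul _ _) (norm_nonneg _)
    _ = ‖P‖ * fnorm X * ‖Q‖ := by ring

lemma l2_opNorm_le_fnorm (A : Matrix (Fin l) (Fin m) ℝ) : ‖A‖ ≤ fnorm A := by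
  rw [l2_opNorm_def]
  refine ContinuousLinearMap.opNorm_le_bound _ (fnorm_nonneg A) fun x => ?_
  refine (pow_le_pow_iff_left₀ (norm_nonneg _) (by positivity [fnorm_nonneg A]) two_ne_zero).mp ?_
  rw [mul_pow, ← fnorm_transpose, fnorm_sq_eq_sum_norm_col_sq, Finset.sum_mul,
    EuclideanSpace.norm_sq_eq]
  refine Finset.sum_le_sum fun i _ => ?_
  have h := abs_real_inner_le_norm (toLp 2 (A i) : EuclideanSpace ℝ (Fin m)) x
  have e : (((toEuclideanLin ≪≫ₗ LinearMap.toContinuousLinearMap) A) x).ofLp i =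
      inner ℝ (toLp 2 (A i) : EuclideanSpace ℝ (Fin m)) x := by
    simp [EuclideanSpace.inner_eq_star_dotProduct, mulVec, dotProduct_comm]
  rw [e, transpose_transpose, ← mul_pow, Real.norm_eq_abs]
  exact pow_le_pow_left₀ (abs_nonneg _) h 2

lemma vec_mul_mul_eq_kronecker_mulVec {R n p : Type*} [CommSemiring R] [Fintype n] [Fintype p]
    (P : Matrix n n R) (X : Matrix n p R) {Q : Matrix p p R} (hQ : Qᵀ = Q) :
    vec (P * X * Q) = (Q ⊗ₖ P) *ᵥ vec X := by
  rw [kronecker_mulVec_vec, hQ]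

lemma fnorm_mul_mul_sub_le {P₁ P₂ : Matrix (Fin l) (Fin l) ℝ} {Q₁ Q₂ : Matrix (Fin m) (Fin m) ℝ}
    (hP₁ : IsStarProjection P₁) (hP₂ : IsStarProjection P₂) (hQ₁ : IsStarProjection Q₁)
    (hQ₂ : IsStarProjection Q₂) (X : Matrix (Fin l) (Fin m) ℝ) :
    fnorm (P₁ * X * Q₁ - P₂ * X * Q₂) ≤ min 1 (‖P₁ - P₂‖ + ‖Q₁ - Q₂‖) * fnorm X := by
  have hX := fnorm_nonneg X
  rw [min_mul_of_nonneg _ _ hX, one_mul]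
  refine le_min ?_ ?_
  · -- `X ↦ P X Q` acts on `vec X` as the star projection `Q ⊗ₖ P`.
    have hK := l2_opNorm_sub_le_one_of_isStarProjection (isStarProjection_kronecker hQ₁ hP₁)
      (isStarProjection_kronecker hQ₂ hP₂)
    rw [fnorm_eq_norm_vec, vec_sub,
      vec_mul_mul_eq_kronecker_mulVec _ _ (transpose_eq_of_isStarProjection hQ₁),
      vec_mul_mul_eq_kronecker_mulVec _ _ (transpose_eq_of_isStarProjection hQ₂), ← sub_mulVec,
      fnorm_eq_norm_vec]
    exact (l2_opNorm_mulVec (Q₁ ⊗ₖ P₁ - Q₂ ⊗ₖ P₂) (toLp 2 (vec X))).trans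
      (mul_le_of_le_one_left (norm_nonneg _) hK)
  · calc fnorm (P₁ * X * Q₁ - P₂ * X * Q₂)
          = fnorm ((P₁ - P₂) * X * Q₁ + P₂ * X * (Q₁ - Q₂)) := by
            simp only [Matrix.sub_mul, Matrix.mul_sub, sub_add_sub_cancel]
      _ ≤ ‖P₁ - P₂‖ * fnorm X * ‖Q₁‖ + ‖P₂‖ * fnorm X * ‖Q₁ - Q₂‖ :=
          (fnorm_add_le _ _).trans (add_le_add (fnorm_mul_mul_le _ _ _) (fnorm_mul_mul_le _ _ _))
      _ ≤ ‖P₁ - P₂‖ * fnorm X * 1 + 1 * fnorm X * ‖Q₁ - Q₂‖ :=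
          add_le_add (mul_le_mul_of_nonneg_left (hQ₁.norm_le _) (mul_nonneg (norm_nonneg _) hX))
            (mul_le_mul_of_nonneg_right (mul_le_mul_of_nonneg_right (hP₂.norm_le _) hX)
              (norm_nonneg _))
      _ = (‖P₁ - P₂‖ + ‖Q₁ - Q₂‖) * fnorm X := by ring

lemma fnorm_sum_smul_vecMulVec_swap {ι : Type*} [Fintype ι] {u u' : ι → Fin l → ℝ}
    {v v' : ι → Fin m → ℝ} (σ σ' : ι → ℝ) :
    fnorm (∑ i, σ i • vecMulVec (v i) (u i) - ∑ i, σ' i • vecMulVec (v' i) (u' i)) =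
      fnorm (∑ i, σ i • vecMulVec (u i) (v i) - ∑ i, σ' i • vecMulVec (u' i) (v' i)) := by
  rw [← fnorm_transpose]
  simp only [transpose_sub, transpose_sum, transpose_smul, transpose_vecMulVec]

end Frobenius

section SingularValueBound

variable {k : Type*} [Fintype k] [DecidableEq k] {l m : ℕ}

lemma l2_opNorm_diagonal_inv_le {σ : k → ℝ} {s : ℝ} (hs : 0 < s) (hσ : ∀ i, s ≤ σ i) :
    ‖(diagonal σ⁻¹ : Matrix k k ℝ)‖ ≤ s⁻¹ := by
  rw [l2_opNorm_diagonal]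
  refine (pi_norm_le_iff_of_nonneg (by positivity)).mpr fun i => ?_
  rw [Pi.inv_apply, norm_inv, Real.norm_of_nonneg (hs.le.trans (hσ i))]
  exact inv_anti₀ hs (hσ i)

lemma l2_opNorm_one_sub_transpose_mul_self_mul_le {A A' : Matrix k (Fin l) ℝ}
    {B B' : Matrix k (Fin m) ℝ} {σ σ' : k → ℝ} {s : ℝ} (hA : A * Aᵀ = 1) (hB : B * Bᵀ = 1)
    (hA' : A' * A'ᵀ = 1) (hs : 0 < s) (hσ : ∀ i, s ≤ σ i) :
    ‖(1 - A'ᵀ * A') * (Aᵀ * A)‖ ≤ fnorm (Aᵀ * diagonal σ * B - A'ᵀ * diagonal σ' * B') / s := by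
  set G := Bᵀ * diagonal σ⁻¹ * A
  have hG : ‖G‖ ≤ s⁻¹ :=
    calc ‖G‖ ≤ ‖Bᵀ‖ * ‖(diagonal σ⁻¹ : Matrix k k ℝ)‖ * ‖A‖ :=
          (l2_opNorm_mul _ _).trans (mul_le_mul_of_nonneg_right (l2_opNorm_mul _ _) (norm_nonneg _))
      _ ≤ 1 * s⁻¹ * 1 := by
        gcongr
        · exact l2_opNorm_transpose_le_one_of_mul_transpose_eq_one hB
        · exact l2_opNorm_diagonal_inv_le hs hσ
        · exact l2_opNorm_le_one_of_mul_transpose_eq_one hA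
      _ = s⁻¹ := by ring
  have hP : Aᵀ * A = Aᵀ * diagonal σ * B * G := by
    have hσσ : diagonal σ * diagonal σ⁻¹ = (1 : Matrix k k ℝ) := by
      rw [diagonal_mul_diagonal, ← diagonal_one]
      exact congrArg diagonal (funext fun i => mul_inv_cancel₀ (hs.trans_le (hσ i)).ne')
    simp only [G, Matrix.mul_assoc]
    rw [← Matrix.mul_assoc B, hB, Matrix.one_mul, ← Matrix.mul_assoc (diagonal σ), hσσ,
      Matrix.one_mul]
  have hR₂ : (1 - A'ᵀ * A') * (A'ᵀ * diagonal σ' * B') = 0 := by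
    simp only [Matrix.sub_mul, Matrix.one_mul, Matrix.mul_assoc]
    rw [← Matrix.mul_assoc A', hA', Matrix.one_mul, sub_self]
  calc ‖(1 - A'ᵀ * A') * (Aᵀ * A)‖
        = ‖(1 - A'ᵀ * A') * (Aᵀ * diagonal σ * B - A'ᵀ * diagonal σ' * B') * G‖ := by
          rw [Matrix.mul_sub, hR₂, sub_zero, hP]
          simp only [Matrix.mul_assoc]
      _ ≤ 1 * fnorm (Aᵀ * diagonal σ * B - A'ᵀ * diagonal σ' * B') * s⁻¹ := by
          refine (l2_opNorm_mul _ _).trans (mul_le_mul ((l2_opNorm_mul _ _).trans ?_) hG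
            (norm_nonneg _) (mul_nonneg zero_le_one (fnorm_nonneg _)))
          exact mul_le_mul ((isStarProjection_transpose_mul_self hA').one_sub.norm_le _)
            (l2_opNorm_le_fnorm _) (norm_nonneg _) zero_le_one
      _ = fnorm (Aᵀ * diagonal σ * B - A'ᵀ * diagonal σ' * B') / s := by ring

lemma l2_opNorm_transpose_mul_self_sub_le {A A' : Matrix k (Fin l) ℝ} {B B' : Matrix k (Fin m) ℝ}
    {σ σ' : k → ℝ} {s : ℝ} (hA : A * Aᵀ = 1) (hB : B * Bᵀ = 1) (hA' : A' * A'ᵀ = 1) (hs : 0 < s)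
    (hσ : ∀ i, s ≤ σ i) :
    ‖Aᵀ * A - A'ᵀ * A'‖ ≤ fnorm (Aᵀ * diagonal σ * B - A'ᵀ * diagonal σ' * B') / s := by
  refine (l2_opNorm_sub_le_of_isStarProjection_of_rank_eq (isStarProjection_transpose_mul_self hA)
    (isStarProjection_transpose_mul_self hA') ?_).trans
    (l2_opNorm_one_sub_transpose_mul_self_mul_le hA hB hA' hs hσ)
  rw [rank_transpose_mul_self_of_mul_transpose_eq_one hA,
    rank_transpose_mul_self_of_mul_transpose_eq_one hA']

lemma l2_opNorm_sum_vecMulVec_self_sub_le {u u' : k → Fin l → ℝ} {v v' : k → Fin m → ℝ}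
    {σ σ' : k → ℝ} {s : ℝ} (hu : ∀ i j, u i ⬝ᵥ u j = if i = j then 1 else 0)
    (hv : ∀ i j, v i ⬝ᵥ v j = if i = j then 1 else 0)
    (hu' : ∀ i j, u' i ⬝ᵥ u' j = if i = j then 1 else 0) (hs : 0 < s) (hσ : ∀ i, s ≤ σ i) :
    ‖∑ i, vecMulVec (u i) (u i) - ∑ i, vecMulVec (u' i) (u' i)‖ ≤
      fnorm (∑ i, σ i • vecMulVec (u i) (v i) - ∑ i, σ' i • vecMulVec (u' i) (v' i)) / s := by
  rw [← transpose_of_mul_of, ← transpose_of_mul_of, ← transpose_of_mul_diagonal_mul_of,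
    ← transpose_of_mul_diagonal_mul_of]
  exact l2_opNorm_transpose_mul_self_sub_le (of_mul_transpose_of_eq_one hu)
    (of_mul_transpose_of_eq_one hv) (of_mul_transpose_of_eq_one hu') hs hσ

end SingularValueBound

theorem tangent_projection_difference_bound_general
    (l m r : ℕ)
    (u : Fin r → Fin l → ℝ) (v : Fin r → Fin m → ℝ) (σ : Fin r → ℝ)
    (u' : Fin r → Fin l → ℝ) (v' : Fin r → Fin m → ℝ) (σ' : Fin r → ℝ)
    (hu : ∀ i j, dotProduct (u i) (u j) = if i = j then 1 else 0)
    (hv : ∀ i j, dotProduct (v i) (v j) = if i = j then 1 else 0)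
    (hu' : ∀ i j, dotProduct (u' i) (u' j) = if i = j then 1 else 0)
    (hv' : ∀ i j, dotProduct (v' i) (v' j) = if i = j then 1 else 0)
    (hσ : ∀ i, 0 < σ i)
    (R1 R2 : Matrix (Fin l) (Fin m) ℝ)
    (hR1 : R1 = ∑ i : Fin r, σ i • vecMulVec (u i) (v i))
    (hR2 : R2 = ∑ i : Fin r, σ' i • vecMulVec (u' i) (v' i))
    -- `σ_r(R¹)` : the smallest (nonzero) singular value of `R¹`
    (sr : ℝ) (hsr : IsLeast (Set.range σ) sr) :
    let PU1 : Matrix (Fin l) (Fin l) ℝ := ∑ i : Fin r, vecMulVec (u i) (u i)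
    let PV1 : Matrix (Fin m) (Fin m) ℝ := ∑ i : Fin r, vecMulVec (v i) (v i)
    let PU2 : Matrix (Fin l) (Fin l) ℝ := ∑ i : Fin r, vecMulVec (u' i) (u' i)
    let PV2 : Matrix (Fin m) (Fin m) ℝ := ∑ i : Fin r, vecMulVec (v' i) (v' i)
    let PT1 : Matrix (Fin l) (Fin m) ℝ → Matrix (Fin l) (Fin m) ℝ := fun X =>
      X - (1 - PU1) * X * (1 - PV1)
    let PT2 : Matrix (Fin l) (Fin m) ℝ → Matrix (Fin l) (Fin m) ℝ := fun X =>
      X - (1 - PU2) * X * (1 - PV2)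
    ∀ X : Matrix (Fin l) (Fin m) ℝ,
      fnorm (PT1 X - PT2 X) ≤ min 1 ((2 / sr) * fnorm (R1 - R2)) * fnorm X := by
  intro PU1 PV1 PU2 PV2 PT1 PT2 X
  obtain ⟨i₀, rfl⟩ := hsr.1
  have hmin : ∀ i, σ i₀ ≤ σ i := fun i => hsr.2 ⟨i, rfl⟩
  have hU : ‖PU1 - PU2‖ ≤ fnorm (R1 - R2) / σ i₀ := by
    rw [hR1, hR2]
    exact l2_opNorm_sum_vecMulVec_self_sub_le hu hv hu' (hσ i₀) hmin
  have hV : ‖PV1 - PV2‖ ≤ fnorm (R1 - R2) / σ i₀ := by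
    rw [hR1, hR2, ← fnorm_sum_smul_vecMulVec_swap]
    exact l2_opNorm_sum_vecMulVec_self_sub_le hv hu hv' (hσ i₀) hmin
  have hT := fnorm_mul_mul_sub_le (isStarProjection_sum_vecMulVec_self hu').one_sub
    (isStarProjection_sum_vecMulVec_self hu).one_sub
    (isStarProjection_sum_vecMulVec_self hv').one_sub
    (isStarProjection_sum_vecMulVec_self hv).one_sub X
  rw [sub_sub_sub_cancel_left, sub_sub_sub_cancel_left] at hT
  have hsum : ‖PU1 - PU2‖ + ‖PV1 - PV2‖ ≤ 2 / σ i₀ * fnorm (R1 - R2) :=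
    calc ‖PU1 - PU2‖ + ‖PV1 - PV2‖ ≤ fnorm (R1 - R2) / σ i₀ + fnorm (R1 - R2) / σ i₀ :=
          add_le_add hU hV
      _ = 2 / σ i₀ * fnorm (R1 - R2) := by ring
  calc fnorm (PT1 X - PT2 X)
        = fnorm ((1 - PU2) * X * (1 - PV2) - (1 - PU1) * X * (1 - PV1)) := by
          simp only [PT1, PT2, sub_sub_sub_cancel_left]
    _ ≤ min 1 (‖PU1 - PU2‖ + ‖PV1 - PV2‖) * fnorm X := hT
    _ ≤ min 1 (2 / σ i₀ * fnorm (R1 - R2)) * fnorm X :=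
        mul_le_mul_of_nonneg_right (min_le_min_left 1 hsum) (fnorm_nonneg X)

/-- Curvature bound on tangent projections: for two rank-`r` matrices `R¹, R²`,
`‖Π_{T_{R¹}} − Π_{T_{R²}}‖ ≤ min(1, (2/σ_r(R¹)) ‖R¹ − R²‖)` in the operator norm induced
by the Frobenius norm, where `σ_r(R¹)` is the smallest nonzero singular value of `R¹`. -/
theorem tangent_projection_difference_bound
    (l m r : ℕ) (hr : 0 < r)
    (u : Fin r → Fin l → ℝ) (v : Fin r → Fin m → ℝ) (σ : Fin r → ℝ)
    (u' : Fin r → Fin l → ℝ) (v' : Fin r → Fin m → ℝ) (σ' : Fin r → ℝ)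
    (hu : ∀ i j, dotProduct (u i) (u j) = if i = j then 1 else 0)
    (hv : ∀ i j, dotProduct (v i) (v j) = if i = j then 1 else 0)
    (hu' : ∀ i j, dotProduct (u' i) (u' j) = if i = j then 1 else 0)
    (hv' : ∀ i j, dotProduct (v' i) (v' j) = if i = j then 1 else 0)
    (hσ : ∀ i, 0 < σ i) (hσ' : ∀ i, 0 < σ' i)
    (R1 R2 : Matrix (Fin l) (Fin m) ℝ)
    (hR1 : R1 = ∑ i : Fin r, σ i • vecMulVec (u i) (v i))
    (hR2 : R2 = ∑ i : Fin r, σ' i • vecMulVec (u' i) (v' i))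
    -- `σ_r(R¹)` : the smallest (nonzero) singular value of `R¹`
    (sr : ℝ) (hsr : IsLeast (Set.range σ) sr) :
    let PU1 : Matrix (Fin l) (Fin l) ℝ := ∑ i : Fin r, vecMulVec (u i) (u i)
    let PV1 : Matrix (Fin m) (Fin m) ℝ := ∑ i : Fin r, vecMulVec (v i) (v i)
    let PU2 : Matrix (Fin l) (Fin l) ℝ := ∑ i : Fin r, vecMulVec (u' i) (u' i)
    let PV2 : Matrix (Fin m) (Fin m) ℝ := ∑ i : Fin r, vecMulVec (v' i) (v' i)
    let PT1 : Matrix (Fin l) (Fin m) ℝ → Matrix (Fin l) (Fin m) ℝ := fun X =>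
      X - (1 - PU1) * X * (1 - PV1)
    let PT2 : Matrix (Fin l) (Fin m) ℝ → Matrix (Fin l) (Fin m) ℝ := fun X =>
      X - (1 - PU2) * X * (1 - PV2)
    ∀ X : Matrix (Fin l) (Fin m) ℝ,
      fnorm (PT1 X - PT2 X) ≤ min 1 ((2 / sr) * fnorm (R1 - R2)) * fnorm X :=
  tangent_projection_difference_bound_general l m r u v σ u' v' σ' hu hv hu' hv' hσ R1 R2 hR1 hR2 sr
    hsr
end

section
/- On the fixed-rank manifold parameterized by R = UZᵀ (UᵀU = I, Z full rank), a smooth curve (U(t), Z(t)) is a geodesic for the metric inherited from the Frobenius inner product if and only if Ü + U U̇ᵀU̇ + 2U̇ Żᵀ Z(ZᵀZ)^{-1} = 0 and Z̈ − Z U̇ᵀ U̇ = 0; equivalently, the acceleration d²/dt²(U(t)Z(t)ᵀ) lies in the normal space at U(t)Z(t)ᵀ at every time. -/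
open Matrix

attribute [local instance] Matrix.normedAddCommGroup Matrix.normedSpace

/-!
Differentiating the gauge `UᵀU̇ = 0` gives `UᵀÜ = -U̇ᵀU̇`, and together with `UᵀU = I` this turns
the tangential part `Uᵀ R̈` of the acceleration `R̈ = ÜZᵀ + 2U̇Żᵀ + UZ̈ᵀ` into `(Z̈ - ZU̇ᵀU̇)ᵀ`.
Once `Z̈ = ZU̇ᵀU̇`, the other component factors as
`R̈ Z = (Ü + UU̇ᵀU̇ + 2U̇ŻᵀZ(ZᵀZ)⁻¹)(ZᵀZ)`, and the Gram matrix `ZᵀZ` is invertible since `Z` has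
full column rank.
-/

section Derivatives

variable {𝕜 : Type*} [NontriviallyNormedField 𝕜] {a b c : Type*} [Fintype b] [Fintype c]
  {t : 𝕜}

theorem HasDerivAt.matrix_transpose [Fintype a] {A : 𝕜 → Matrix a b 𝕜} {A' : Matrix a b 𝕜}
    (hA : HasDerivAt A A' t) : HasDerivAt (fun s => (A s)ᵀ) A'ᵀ t :=
  hasDerivAt_pi.mpr fun j => hasDerivAt_pi.mpr fun i =>
    hasDerivAt_pi.mp (hasDerivAt_pi.mp hA i) j

theorem HasDerivAt.matrix_mul {A : 𝕜 → Matrix a b 𝕜} {B : 𝕜 → Matrix b c 𝕜}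
    {A' : Matrix a b 𝕜} {B' : Matrix b c 𝕜} (hA : HasDerivAt A A' t) (hB : HasDerivAt B B' t) :
    HasDerivAt (fun s => A s * B s) (A' * B t + A t * B') t := by
  refine hasDerivAt_pi.mpr fun i => hasDerivAt_pi.mpr fun k => ?_
  simp only [Matrix.add_apply, mul_apply, ← Finset.sum_add_distrib]
  exact HasDerivAt.fun_sum fun j _ =>
    (hasDerivAt_pi.mp (hasDerivAt_pi.mp hA i) j).mul (hasDerivAt_pi.mp (hasDerivAt_pi.mp hB j) k)

theorem transpose_mul_second_deriv_eq_neg_of_gauge [Fintype a] {U U' U'' : 𝕜 → Matrix a b 𝕜}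
    (hU' : HasDerivAt U (U' t) t) (hU'' : HasDerivAt U' (U'' t) t)
    (hgauge : ∀ s, (U s)ᵀ * U' s = 0) :
    (U t)ᵀ * U'' t = -((U' t)ᵀ * U' t) := by
  have hderiv := hU'.matrix_transpose.matrix_mul hU''
  simp only [hgauge] at hderiv
  exact eq_neg_of_add_eq_zero_right (hderiv.unique (hasDerivAt_const t 0))

end Derivatives

theorem Matrix.isUnit_transpose_mul_self_of_rank_eq {R m n : Type*} [Field R] [LinearOrder R]
    [IsStrictOrderedRing R] [Fintype m] [Fintype n] [DecidableEq n] {A : Matrix m n R}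
    (hA : A.rank = Fintype.card n) : IsUnit (Aᵀ * A) := by
  have hrange : LinearMap.range (Aᵀ * A).mulVecLin = ⊤ :=
    Submodule.eq_top_of_finrank_eq (by rw [← rank, rank_transpose_mul_self, hA]; simp)
  exact mulVec_surjective_iff_isUnit.mp (LinearMap.range_eq_top.mp hrange)

section Acceleration

variable {R l m r : Type*} [CommRing R] [Fintype l] [Fintype r] [DecidableEq r]
  {U U' U'' : Matrix l r R} {Z Z' Z'' : Matrix m r R}

theorem transpose_mul_acceleration (horth : Uᵀ * U = 1) (hgauge : Uᵀ * U' = 0)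
    (hgauge' : Uᵀ * U'' = -(U'ᵀ * U')) :
    Uᵀ * (U'' * Zᵀ + (2 : R) • (U' * Z'ᵀ) + U * Z''ᵀ) = (Z'' - Z * U'ᵀ * U')ᵀ := by
  simp only [Matrix.mul_add, Matrix.mul_smul, ← Matrix.mul_assoc, horth, hgauge, hgauge',
    Matrix.zero_mul, smul_zero, Matrix.one_mul, Matrix.neg_mul, transpose_sub, transpose_mul,
    transpose_transpose]
  abel

theorem acceleration_mul_eq_of_eq [Fintype m] (hZ'' : Z'' = Z * U'ᵀ * U')
    (hgram : IsUnit (Zᵀ * Z)) :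
    (U'' * Zᵀ + (2 : R) • (U' * Z'ᵀ) + U * Z''ᵀ) * Z =
      (U'' + U * U'ᵀ * U' + (2 : R) • (U' * Z'ᵀ * Z * (Zᵀ * Z)⁻¹)) * (Zᵀ * Z) := by
  have hinv : (Zᵀ * Z)⁻¹ * (Zᵀ * Z) = 1 := nonsing_inv_mul _ ((isUnit_iff_isUnit_det _).mp hgram)
  simp only [hZ'', transpose_mul, transpose_transpose, Matrix.add_mul, Matrix.smul_mul,
    Matrix.mul_assoc, hinv, Matrix.mul_one]
  abel

theorem geodesic_equations_iff_acceleration_normal [Fintype m] (horth : Uᵀ * U = 1)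
    (hgauge : Uᵀ * U' = 0) (hgauge' : Uᵀ * U'' = -(U'ᵀ * U')) (hgram : IsUnit (Zᵀ * Z)) :
    (U'' + U * U'ᵀ * U' + (2 : R) • (U' * Z'ᵀ * Z * (Zᵀ * Z)⁻¹) = 0 ∧
        Z'' - Z * U'ᵀ * U' = 0) ↔
      (Uᵀ * (U'' * Zᵀ + (2 : R) • (U' * Z'ᵀ) + U * Z''ᵀ) = 0 ∧
        (U'' * Zᵀ + (2 : R) • (U' * Z'ᵀ) + U * Z''ᵀ) * Z = 0) := by
  rw [transpose_mul_acceleration horth hgauge hgauge', transpose_eq_zero]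
  constructor
  · rintro ⟨hU, hZ⟩
    rw [acceleration_mul_eq_of_eq (sub_eq_zero.mp hZ) hgram, hU, Matrix.zero_mul]
    exact ⟨hZ, rfl⟩
  · rintro ⟨hZ, hnormal⟩
    rw [acceleration_mul_eq_of_eq (sub_eq_zero.mp hZ) hgram] at hnormal
    have hinv : (Zᵀ * Z) * (Zᵀ * Z)⁻¹ = 1 :=
      mul_nonsing_inv _ ((isUnit_iff_isUnit_det _).mp hgram)
    exact ⟨mul_left_injective_of_inv _ _ hinv (hnormal.trans (Matrix.zero_mul _).symm), hZ⟩

end Acceleration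

theorem geodesic_equations_fixed_rank_manifold_general
    (l m r : ℕ)
    (U U' U'' : ℝ → Matrix (Fin l) (Fin r) ℝ)
    (Z Z' Z'' : ℝ → Matrix (Fin m) (Fin r) ℝ)
    (hU' : ∀ t, HasDerivAt U (U' t) t) (hU'' : ∀ t, HasDerivAt U' (U'' t) t)
    (horth : ∀ t, (U t)ᵀ * U t = 1)
    (hgauge : ∀ t, (U t)ᵀ * U' t = 0)
    (hrank : ∀ t, (Z t).rank = r) :
    -- the acceleration of `R(t) = U(t)Z(t)ᵀ`
    let Racc : ℝ → Matrix (Fin l) (Fin m) ℝ := fun t =>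
      U'' t * (Z t)ᵀ + (2 : ℝ) • (U' t * (Z' t)ᵀ) + U t * (Z'' t)ᵀ
    ((∀ t, U'' t + U t * (U' t)ᵀ * U' t +
        (2 : ℝ) • (U' t * (Z' t)ᵀ * Z t * ((Z t)ᵀ * Z t)⁻¹) = 0 ∧
      Z'' t - Z t * (U' t)ᵀ * U' t = 0) ↔
    -- the acceleration lies in the normal space at `U(t)Z(t)ᵀ` at every time
    (∀ t, (U t)ᵀ * Racc t = 0 ∧ Racc t * Z t = 0)) :=
  forall_congr' fun t =>
    geodesic_equations_iff_acceleration_normal (horth t) (hgauge t)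
      (transpose_mul_second_deriv_eq_neg_of_gauge (hU' t) (hU'' t) hgauge)
      (isUnit_transpose_mul_self_of_rank_eq (by rw [hrank t, Fintype.card_fin]))

/-- Geodesic equations on the fixed-rank manifold: a smooth curve `R(t) = U(t)Z(t)ᵀ`
(with `UᵀU = I`, the gauge `UᵀU̇ = 0` and `Z` of full rank) is a geodesic, i.e. its
acceleration lies in the normal space at every time, if and only if
`Ü + U U̇ᵀU̇ + 2U̇ŻᵀZ(ZᵀZ)⁻¹ = 0` and `Z̈ − ZU̇ᵀU̇ = 0`. -/
theorem geodesic_equations_fixed_rank_manifold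
    (l m r : ℕ)
    (U U' U'' : ℝ → Matrix (Fin l) (Fin r) ℝ)
    (Z Z' Z'' : ℝ → Matrix (Fin m) (Fin r) ℝ)
    (hU' : ∀ t, HasDerivAt U (U' t) t) (hU'' : ∀ t, HasDerivAt U' (U'' t) t)
    (hZ' : ∀ t, HasDerivAt Z (Z' t) t) (hZ'' : ∀ t, HasDerivAt Z' (Z'' t) t)
    (horth : ∀ t, (U t)ᵀ * U t = 1)
    (hgauge : ∀ t, (U t)ᵀ * U' t = 0)
    (hrank : ∀ t, (Z t).rank = r) :
    -- the acceleration of `R(t) = U(t)Z(t)ᵀ`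
    let Racc : ℝ → Matrix (Fin l) (Fin m) ℝ := fun t =>
      U'' t * (Z t)ᵀ + (2 : ℝ) • (U' t * (Z' t)ᵀ) + U t * (Z'' t)ᵀ
    ((∀ t, U'' t + U t * (U' t)ᵀ * U' t +
        (2 : ℝ) • (U' t * (Z' t)ᵀ * Z t * ((Z t)ᵀ * Z t)⁻¹) = 0 ∧
      Z'' t - Z t * (U' t)ᵀ * U' t = 0) ↔
    -- the acceleration lies in the normal space at `U(t)Z(t)ᵀ` at every time
    (∀ t, (U t)ᵀ * Racc t = 0 ∧ Racc t * Z t = 0)) :=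
  geodesic_equations_fixed_rank_manifold_general l m r U U' U'' Z Z' Z'' hU' hU'' horth hgauge hrank
end
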